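/- arXiv:2407.10288 — 6 statements merged into one kernel-verified Lean document; each statement's English description precedes it below -/
import Mathlib

section
/- Let n ≥ 4 and 0 ≤ k ≤ n − 3, and let G be a graph attaining the maximum Wiener index among all connected graphs on n vertices with exactly k cut vertices. Then G is triangle-free. -/
open SimpleGraph

variable {V : Type*}

/-- The distance (transmission) of a vertex `v`: the sum of distances from `v`
to all other vertices. -/
noncomputable def vertexDistance [Fintype V] (G : SimpleGraph V) (v : V) : ℕ :=
  ∑ u : V, G.dist v u

/-- The Wiener index: the sum of distances over all unordered pairs of vertices. -/
noncomputable def wienerIndex [Fintype V] (G : SimpleGraph V) : ℕ :=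
  (∑ u : V, ∑ v : V, G.dist u v) / 2

/-- `v` is a cut vertex of `G` if deleting it leaves a disconnected
(or empty) graph. -/
def IsCutVertex (G : SimpleGraph V) (v : V) : Prop :=
  ¬ (G.induce ({v}ᶜ : Set V)).Connected

/-- The number of cut vertices of `G`. -/
noncomputable def cutVertexCount (G : SimpleGraph V) : ℕ :=
  {v : V | IsCutVertex G v}.ncard

/-- `B` is (the vertex set of) a block of `G`: a maximal connected subgraph on at
least two vertices that has no cut vertex of its own. -/
def IsBlock (G : SimpleGraph V) (B : Set V) : Prop :=
  2 ≤ B.ncard ∧ (G.induce B).Connected ∧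
    (∀ v : B, ¬ IsCutVertex (G.induce B) v) ∧
    ∀ C : Set V, B ⊆ C → (G.induce C).Connected →
      (∀ v : C, ¬ IsCutVertex (G.induce C) v) → C = B

/-- A pendant block: a block containing exactly one cut vertex of `G`. -/
def IsPendantBlock (G : SimpleGraph V) (B : Set V) : Prop :=
  IsBlock G B ∧ {v ∈ B | IsCutVertex G v}.ncard = 1

/-- An s-pendant block: a pendant block which shares its cut vertex with exactly
one non-pendant block of `G`. -/
def IsSPendantBlock (G : SimpleGraph V) (B : Set V) : Prop :=
  IsPendantBlock G B ∧
    ∀ w ∈ B, IsCutVertex G w →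
      {C : Set V | IsBlock G C ∧ ¬ IsPendantBlock G C ∧ w ∈ C}.ncard = 1

/-- The graph `L_{n,g}`: a cycle `C_g` on the vertices `0, …, g-1` (consecutive
edges together with the chord `{0, g-1}`) with the path `g-1, g, …, n-1`
attached at the vertex `g-1`.  For `g < n` its unique pendant vertex is `n-1`.
For `g = n` this is the cycle `C_n`. -/
def lollipop (n g : ℕ) : SimpleGraph (Fin n) :=
  SimpleGraph.fromRel (fun i j =>
    (i : ℕ) + 1 = (j : ℕ) ∨ ((i : ℕ) = 0 ∧ (j : ℕ) = g - 1))

/-- The cycle `C_n` on `n` vertices. -/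
def cycleG (n : ℕ) : SimpleGraph (Fin n) := lollipop n n

/-- The graph `C_{m₁,m₂}ⁿ`: a cycle `C_{m₁}` on `0, …, m₁-1`, a cycle `C_{m₂}`
on `n-m₂, …, n-1`, joined by the path `m₁-1, m₁, …, n-m₂` (which degenerates to
a single identified vertex when `n = m₁+m₂-1`). -/
def dumbbell (n m₁ m₂ : ℕ) : SimpleGraph (Fin n) :=
  SimpleGraph.fromRel (fun i j =>
    (i : ℕ) + 1 = (j : ℕ) ∨ ((i : ℕ) = 0 ∧ (j : ℕ) = m₁ - 1)
      ∨ ((i : ℕ) = n - m₂ ∧ (j : ℕ) = n - 1))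

/-- Identify the vertex `w` of `H` with the vertex `u` of `G`:  the resulting
graph on `U ⊕ {x : W // x ≠ w}` whose edges are those of `G`, those of `H` not
meeting `w`, and the edges of `H` at `w` re-attached at `u`. -/
def glue {U W : Type*} (G : SimpleGraph U) (u : U) (H : SimpleGraph W) (w : W) :
    SimpleGraph (U ⊕ {x : W // x ≠ w}) :=
  SimpleGraph.fromRel (fun a b =>
    match a, b with
    | Sum.inl x, Sum.inl y => G.Adj x y
    | Sum.inl x, Sum.inr y => x = u ∧ H.Adj w y.val
    | Sum.inr x, Sum.inr y => H.Adj x.val y.val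
    | _, _ => False)


/-! If `G` contains a triangle `uvw`, deleting the edge `uv` keeps `G` connected and strictly
increases the Wiener index, so by maximality it must change the set of cut vertices. Only `w`
can change status, so `w` becomes a new cut vertex: `G - w` is connected while `u` and `v` are
separated in `G - w - uv`. This holds for each of the three edges of the triangle. Since `n ≥ 4`
and `G` is connected, some vertex `t` outside the triangle is adjacent to one of its vertices,
say `w`. In `G - w - uv` it lies in the component of `u`, say, which avoids `v`; so `w t ⋯ u`
joins `w` to `u` in `G - v - wu`, contradicting separation for the edge `wu`. -/

namespace SimpleGraph

variable {G H : SimpleGraph V} {x y : V}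

theorem Connected.reachable_or_reachable_of_adj_or_eq (hG : G.Connected)
    (h : ∀ a b, G.Adj a b → H.Adj a b ∨ s(a, b) = s(x, y)) (t : V) :
    H.Reachable x t ∨ H.Reachable y t := by
  induction (reachable_iff_reflTransGen x t).mp (hG.preconnected x t) with
  | refl => exact Or.inl .rfl
  | tail _ hbc ih =>
    rcases h _ _ hbc with hH | hxy
    · exact ih.imp (·.trans hH.reachable) (·.trans hH.reachable)
    · rcases Sym2.eq_iff.mp hxy with ⟨-, rfl⟩ | ⟨-, rfl⟩
      · exact Or.inr .rfl
      · exact Or.inl .rfl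

theorem Connected.connected_of_adj_or_eq (hG : G.Connected)
    (h : ∀ a b, G.Adj a b → H.Adj a b ∨ s(a, b) = s(x, y)) (hxy : H.Reachable x y) :
    H.Connected := by
  have hx (t : V) : H.Reachable x t :=
    (hG.reachable_or_reachable_of_adj_or_eq h t).elim id hxy.trans
  exact (connected_iff H).mpr ⟨fun a b => (hx a).symm.trans (hx b), hG.nonempty⟩

theorem deleteEdges_induce_compl_singleton (G : SimpleGraph V) (x y : V) :
    (G.deleteEdges {s(x, y)}).induce {x}ᶜ = G.induce {x}ᶜ := by
  ext ⟨a, ha⟩ ⟨b, hb⟩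
  simp only [comap_adj, Function.Embedding.coe_subtype, deleteEdges_adj, Set.mem_singleton_iff,
    Sym2.eq_iff, and_iff_left_iff_imp]
  rintro - (⟨rfl, -⟩ | ⟨-, rfl⟩)
  · exact ha rfl
  · exact hb rfl

theorem deleteEdges_adj_of_triangle {u v w : V} (huw : G.Adj u w) (hvw : G.Adj v w) :
    (G.deleteEdges {s(u, v)}).Adj u w ∧ (G.deleteEdges {s(u, v)}).Adj w v :=
  ⟨deleteEdges_adj.mpr ⟨huw, by simp [huw.ne.symm, hvw.ne.symm]⟩,
    deleteEdges_adj.mpr ⟨hvw.symm, by simp [huw.ne.symm, hvw.ne.symm]⟩⟩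

theorem induce_adj_deleteEdges_or_eq {s : Set V} {u v : V} (hu : u ∈ s) (hv : v ∈ s) {a b : s}
    (hab : (G.induce s).Adj a b) :
    ((G.deleteEdges {s(u, v)}).induce s).Adj a b ∨ s(a, b) = s(⟨u, hu⟩, ⟨v, hv⟩) := by
  by_cases he : s(a.1, b.1) = s(u, v)
  · right
    simpa [Sym2.eq_iff, Subtype.ext_iff] using he
  · exact Or.inl (deleteEdges_adj.mpr ⟨hab, he⟩)

/-- The component of `u` in `G - w - uv` does not contain `v`, so it survives in `G - v - wu`. -/
theorem reachable_induce_deleteEdges_of_adj {u v w t : V}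
    (huv : u ≠ v) (hu : u ≠ w) (hv : v ≠ w) (ht : t ≠ w)
    (hsep : ¬ ((G.deleteEdges {s(u, v)}).induce {w}ᶜ).Reachable ⟨u, hu⟩ ⟨v, hv⟩)
    (hut : ((G.deleteEdges {s(u, v)}).induce {w}ᶜ).Reachable ⟨u, hu⟩ ⟨t, ht⟩)
    (hwt : G.Adj w t) (htu : t ≠ u) :
    ((G.deleteEdges {s(w, u)}).induce {v}ᶜ).Reachable ⟨w, hv.symm⟩ ⟨u, huv⟩ := by
  suffices h : ∀ y, ((G.deleteEdges {s(u, v)}).induce {w}ᶜ).Reachable ⟨u, hu⟩ y →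
      ∃ hy : y.1 ≠ v, ((G.deleteEdges {s(w, u)}).induce {v}ᶜ).Reachable ⟨u, huv⟩ ⟨y, hy⟩ by
    obtain ⟨htv, hr⟩ := h _ hut
    have hwt' : ((G.deleteEdges {s(w, u)}).induce {v}ᶜ).Adj ⟨w, hv.symm⟩ ⟨t, htv⟩ :=
      deleteEdges_adj.mpr ⟨hwt, by simp [htu, ht]⟩
    exact hwt'.reachable.trans hr.symm
  intro y hy
  induction (reachable_iff_reflTransGen _ _).mp hy with
  | refl => exact ⟨huv, .rfl⟩
  | @tail b c hub hbc ih =>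
    obtain ⟨hbv, hr⟩ := ih ((reachable_iff_reflTransGen _ _).mpr hub)
    have hcv : c.1 ≠ v := by
      rintro hcv
      obtain rfl : c = ⟨v, hv⟩ := Subtype.ext hcv
      exact hsep ((reachable_iff_reflTransGen _ _).mpr (hub.tail hbc))
    have hbc' : ((G.deleteEdges {s(w, u)}).induce {v}ᶜ).Adj ⟨b, hbv⟩ ⟨c, hcv⟩ :=
      deleteEdges_adj.mpr ⟨(deleteEdges_adj.mp hbc).1, by
        simp [(Set.mem_compl_singleton_iff.mp b.2), Set.mem_compl_singleton_iff.mp c.2]⟩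
    exact ⟨hcv, hr.trans hbc'.reachable⟩

end SimpleGraph

theorem IsCutVertex.of_le {G H : SimpleGraph V} (hle : H ≤ G) {x : V} (hx : IsCutVertex G x) :
    IsCutVertex H x :=
  fun hH => hx (hH.mono (comap_monotone _ hle))

theorem isCutVertex_deleteEdges_iff {G : SimpleGraph V} {u v w x : V} (huw : G.Adj u w)
    (hvw : G.Adj v w) (hxw : x ≠ w) :
    IsCutVertex (G.deleteEdges {s(u, v)}) x ↔ IsCutVertex G x := by
  refine ⟨fun hx hGx => ?_, IsCutVertex.of_le (deleteEdges_le _)⟩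
  by_cases hxu : x = u
  · subst hxu
    exact hx (by rwa [deleteEdges_induce_compl_singleton])
  by_cases hxv : x = v
  · subst hxv
    exact hx (by rwa [Sym2.eq_swap, deleteEdges_induce_compl_singleton])
  refine hx (hGx.connected_of_adj_or_eq (fun _ _ => induce_adj_deleteEdges_or_eq (s := {x}ᶜ)
    (Ne.symm hxu) (Ne.symm hxv)) ?_)
  have h := deleteEdges_adj_of_triangle huw hvw
  have hu : ((G.deleteEdges {s(u, v)}).induce {x}ᶜ).Adj ⟨u, Ne.symm hxu⟩ ⟨w, Ne.symm hxw⟩ := h.1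
  have hv : ((G.deleteEdges {s(u, v)}).induce {x}ᶜ).Adj ⟨w, Ne.symm hxw⟩ ⟨v, Ne.symm hxv⟩ := h.2
  exact hu.reachable.trans hv.reachable

theorem sum_dist_add_two_le [Fintype V] {G H : SimpleGraph V} (hle : H ≤ G) (hH : H.Connected)
    {a b : V} (hab : G.Adj a b) (hnab : ¬ H.Adj a b) :
    ∑ u, ∑ v, G.dist u v + 2 ≤ ∑ u, ∑ v, H.dist u v := by
  classical
  have hrow {u v : V} (huv : G.Adj u v) (hnuv : ¬ H.Adj u v) :
      ∑ x, G.dist u x < ∑ x, H.dist u x := by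
    refine Finset.sum_lt_sum (fun x _ => (hH.preconnected u x).dist_anti hle) ⟨v, by simp, ?_⟩
    rw [dist_eq_one_iff_adj.mpr huv]
    exact (hH.preconnected u v).one_lt_dist_of_ne_of_not_adj huv.ne hnuv
  have hrest : ∑ u ∈ Finset.univ.erase a, ∑ v, G.dist u v
      < ∑ u ∈ Finset.univ.erase a, ∑ v, H.dist u v :=
    Finset.sum_lt_sum (fun u _ => Finset.sum_le_sum fun v _ => (hH.preconnected u v).dist_anti hle)
      ⟨b, by simp [hab.ne.symm], hrow hab.symm fun h => hnab h.symm⟩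
  rw [← Finset.add_sum_erase _ (fun u => ∑ v, G.dist u v) (Finset.mem_univ a),
    ← Finset.add_sum_erase _ (fun u => ∑ v, H.dist u v) (Finset.mem_univ a)]
  have := hrow hab hnab
  omega

theorem wienerIndex_lt_of_le [Fintype V] {G H : SimpleGraph V} (hle : H ≤ G) (hH : H.Connected)
    {a b : V} (hab : G.Adj a b) (hnab : ¬ H.Adj a b) : wienerIndex G < wienerIndex H := by
  have := sum_dist_add_two_le hle hH hab hnab
  unfold wienerIndex
  omega

def IsWienerMaximal [Fintype V] (G : SimpleGraph V) : Prop :=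
  G.Connected ∧ ∀ H : SimpleGraph V, H.Connected → cutVertexCount H = cutVertexCount G →
    wienerIndex H ≤ wienerIndex G

namespace IsWienerMaximal

variable [Fintype V] {G : SimpleGraph V} {u v w : V}

theorem isCutVertex_deleteEdges (hG : IsWienerMaximal G) (huv : G.Adj u v) (huw : G.Adj u w)
    (hvw : G.Adj v w) : ¬ IsCutVertex G w ∧ IsCutVertex (G.deleteEdges {s(u, v)}) w := by
  have hG' : (G.deleteEdges {s(u, v)}).Connected := by
    have h := deleteEdges_adj_of_triangle huw hvw
    exact hG.1.connected_delete_edge_of_not_isBridge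
      fun hb => isBridge_iff.mp hb (h.1.reachable.trans h.2.reachable)
  by_contra hw
  have hcut : cutVertexCount (G.deleteEdges {s(u, v)}) = cutVertexCount G := by
    refine congrArg Set.ncard (Set.ext fun x => ?_)
    by_cases hxw : x = w
    · subst hxw
      exact ⟨fun h => not_not.mp fun h' => hw ⟨h', h⟩, IsCutVertex.of_le (deleteEdges_le _)⟩
    · exact isCutVertex_deleteEdges_iff huw hvw hxw
  exact (hG.2 _ hG' hcut).not_gt (wienerIndex_lt_of_le (deleteEdges_le _) hG' huv (by simp))

theorem not_reachable_deleteEdges_induce (hG : IsWienerMaximal G) (huv : G.Adj u v)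
    (huw : G.Adj u w) (hvw : G.Adj v w) :
    (G.induce {w}ᶜ).Connected ∧
      ¬ ((G.deleteEdges {s(u, v)}).induce {w}ᶜ).Reachable ⟨u, huw.ne⟩ ⟨v, hvw.ne⟩ := by
  obtain ⟨hGw, hG'w⟩ := hG.isCutVertex_deleteEdges huv huw hvw
  exact ⟨not_not.mp hGw, fun hr => hG'w ((not_not.mp hGw).connected_of_adj_or_eq
    (fun _ _ => induce_adj_deleteEdges_or_eq huw.ne hvw.ne) hr)⟩

theorem eq_or_eq_of_adj (hG : IsWienerMaximal G) (huv : G.Adj u v) (huw : G.Adj u w)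
    (hvw : G.Adj v w) {t : V} (hwt : G.Adj w t) : t = u ∨ t = v := by
  by_contra! ⟨htu, htv⟩
  have ht : t ≠ w := hwt.ne.symm
  obtain ⟨hconn, hsep⟩ := hG.not_reachable_deleteEdges_induce huv huw hvw
  have hsep_u := (hG.not_reachable_deleteEdges_induce huw.symm hvw.symm huv).2
  have hsep_v := (hG.not_reachable_deleteEdges_induce hvw huv.symm huw.symm).2
  rcases hconn.reachable_or_reachable_of_adj_or_eq
    (fun _ _ => induce_adj_deleteEdges_or_eq (s := {w}ᶜ) huw.ne hvw.ne) ⟨t, ht⟩ with hut | hvt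
  · exact hsep_u (reachable_induce_deleteEdges_of_adj huv.ne huw.ne hvw.ne ht hsep hut hwt htu)
  · rw [Sym2.eq_swap] at hsep hvt hsep_v
    exact hsep_v (reachable_induce_deleteEdges_of_adj huv.ne.symm hvw.ne huw.ne ht
      (hsep ∘ Reachable.symm) hvt hwt htv).symm

end IsWienerMaximal

theorem stmt2_general (n k : ℕ) (hn : 4 ≤ n)
    (G : SimpleGraph (Fin n)) (hG : G.Connected) (hcut : cutVertexCount G = k)
    (hmax : ∀ H : SimpleGraph (Fin n), H.Connected → cutVertexCount H = k →
      wienerIndex H ≤ wienerIndex G) :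
    G.CliqueFree 3 := by
  intro T hT
  obtain ⟨u, v, w, huv, huw, hvw, rfl⟩ := is3Clique_iff.mp hT
  have hGmax : IsWienerMaximal G := ⟨hG, fun H hH hHk => hmax H hH (hHk.trans hcut)⟩
  obtain ⟨x, -, hx⟩ := Finset.exists_mem_notMem_of_card_lt_card (s := {u, v, w})
    (t := Finset.univ) (by grind [Finset.card_le_three, Finset.card_univ, Fintype.card_fin])
  obtain ⟨⟨⟨a, t⟩, hat⟩, -, ha, ht⟩ := (hG.preconnected u x).some.exists_boundary_dart
    (({u, v, w} : Finset (Fin n)) : Set (Fin n)) (by simp) hx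
  simp only [Finset.coe_insert, Finset.coe_singleton, Set.mem_insert_iff,
    Set.mem_singleton_iff] at ha ht
  rcases ha with rfl | rfl | rfl
  · have := hGmax.eq_or_eq_of_adj hvw huv.symm huw.symm hat
    tauto
  · have := hGmax.eq_or_eq_of_adj huw.symm hvw.symm huv hat
    tauto
  · have := hGmax.eq_or_eq_of_adj huv huw hvw hat
    tauto

/-- A graph maximizing the Wiener index among connected graphs on `n ≥ 4`
vertices with exactly `k` cut vertices (`0 ≤ k ≤ n-3`) is triangle-free. -/
theorem stmt2 (n k : ℕ) (hn : 4 ≤ n) (hk : k ≤ n - 3)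
    (G : SimpleGraph (Fin n)) (hG : G.Connected) (hcut : cutVertexCount G = k)
    (hmax : ∀ H : SimpleGraph (Fin n), H.Connected → cutVertexCount H = k →
      wienerIndex H ≤ wienerIndex G) :
    G.CliqueFree 3 :=
  stmt2_general n k hn G hG hcut hmax
end

section
/- Let 3 ≤ g ≤ n and let v be the pendant vertex of the graph L_{n,g} (for g < n; for g = n interpret v as any vertex of the cycle C_n). Then the distance of v in L_{n,g} equals g²/4 + (n−g)(n+g−1)/2 if g is even, and (g²−1)/4 + (n−g)(n+g−1)/2 if g is odd. -/
/-!
From the pendant vertex `n - 1`, the vertex `i` is at distance `n - 1 - i` if it lies on the path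
(`g - 1 ≤ i`), and at distance `(n - g) + min (g - 1 - i) (i + 1)` if it lies on the cycle. This is
certified by a potential argument: the candidate grows by at most one along every edge and can be
decreased by one step from every other vertex. Summing, the path contributes `(n - g + 1)(n - g)/2`,
the cycle `(g - 1)(n - g) + ⌊g²/4⌋`, and the two parity cases of the formula agree because odd
squares are `1` mod `4`.
-/

open SimpleGraph

variable {V : Type*}

namespace SimpleGraph

variable {G : SimpleGraph V} {f : V → ℕ}

theorem Walk.le_add_length_of_adj_le (hf : ∀ a b, G.Adj a b → f b ≤ f a + 1) {a b : V}
    (p : G.Walk a b) : f b ≤ f a + p.length := by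
  induction p with
  | nil => simp
  | cons hadj _ ih =>
    rw [Walk.length_cons]
    have := hf _ _ hadj
    omega

theorem exists_walk_length_le_of_exists_adj_lt {v : V}
    (hf : ∀ u, u ≠ v → ∃ w, G.Adj w u ∧ f w < f u) (u : V) :
    ∃ p : G.Walk v u, p.length ≤ f u := by
  induction hk : f u using Nat.strong_induction_on generalizing u with
  | _ k ih =>
    by_cases huv : u = v
    · subst huv
      exact ⟨Walk.nil, by simp⟩
    · obtain ⟨w, hadj, hlt⟩ := hf u huv
      obtain ⟨p, hp⟩ := ih (f w) (hk ▸ hlt) w rfl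
      exact ⟨p.concat hadj, by rw [Walk.length_concat]; omega⟩

theorem dist_eq_of_adj_le_of_exists_adj_lt {v : V} (hv : f v = 0)
    (hle : ∀ a b, G.Adj a b → f b ≤ f a + 1) (hlt : ∀ u, u ≠ v → ∃ w, G.Adj w u ∧ f w < f u)
    (u : V) : G.dist v u = f u := by
  obtain ⟨p, hp⟩ := exists_walk_length_le_of_exists_adj_lt hlt u
  obtain ⟨q, hq⟩ := p.reachable.exists_walk_length_eq_dist
  have hlower := q.le_add_length_of_adj_le hle
  have hupper := dist_le p
  omega

end SimpleGraph

theorem sum_range_min_sub_add_one (m : ℕ) :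
    ∑ i ∈ Finset.range m, min (m - i) (i + 1) = (m + 1) ^ 2 / 4 := by
  induction m using Nat.twoStepInduction with
  | zero => rfl
  | one => rfl
  | more m ih _ =>
    -- the inner terms are those for `m`, each raised by one, between two end terms equal to `1`
    have hinner : ∀ i ∈ Finset.range m,
        min (m + 2 - (i + 1)) (i + 1 + 1) = min (m - i) (i + 1) + 1 := by
      intro i hi
      rw [Finset.mem_range] at hi
      omega
    rw [Finset.sum_range_succ', Finset.sum_range_succ, Finset.sum_congr rfl hinner,
      Finset.sum_add_distrib, ih, show (m + 2 + 1) ^ 2 = (m + 1) ^ 2 + (m + 2) * 4 by ring,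
      Nat.add_mul_div_right _ _ (by norm_num)]
    simp only [Finset.sum_const, Finset.card_range, smul_eq_mul]
    omega

theorem ite_even_sq_div_four (g : ℕ) :
    (if Even g then g ^ 2 / 4 else (g ^ 2 - 1) / 4) = g ^ 2 / 4 := by
  split_ifs with hg
  · rfl
  · obtain ⟨k, rfl⟩ := Nat.not_even_iff_odd.mp hg
    rw [show (2 * k + 1) ^ 2 = 4 * (k ^ 2 + k) + 1 by ring]
    omega

theorem lollipop_adj_iff {n g : ℕ} {a b : Fin n} :
    (lollipop n g).Adj a b ↔ (a : ℕ) ≠ b ∧ ((a : ℕ) + 1 = b ∨ (b : ℕ) + 1 = a ∨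
      ((a : ℕ) = 0 ∧ (b : ℕ) = g - 1) ∨ ((b : ℕ) = 0 ∧ (a : ℕ) = g - 1)) := by
  rw [lollipop, fromRel_adj, Ne, Fin.ext_iff]
  tauto

def lollipopLastDist (n g i : ℕ) : ℕ :=
  if g - 1 ≤ i then n - 1 - i else (n - g) + min (g - 1 - i) (i + 1)

theorem lollipopLastDist_le_add_one_of_adj {n g : ℕ} {a b : Fin n} (h : (lollipop n g).Adj a b) :
    lollipopLastDist n g b ≤ lollipopLastDist n g a + 1 := by
  rw [lollipop_adj_iff] at h
  have := b.isLt
  unfold lollipopLastDist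
  split_ifs <;> omega

theorem exists_adj_lollipopLastDist_lt {n g : ℕ} (hgn : g ≤ n) (u : Fin n)
    (hu : (u : ℕ) ≠ n - 1) :
    ∃ w : Fin n, (lollipop n g).Adj w u ∧ lollipopLastDist n g w < lollipopLastDist n g u := by
  have hun := u.isLt
  obtain ⟨w, hwn, hadj, hlt⟩ : ∃ w < n, ((w ≠ (u : ℕ)) ∧ (w + 1 = u ∨ (u : ℕ) + 1 = w ∨
      (w = 0 ∧ (u : ℕ) = g - 1) ∨ ((u : ℕ) = 0 ∧ w = g - 1))) ∧
      lollipopLastDist n g w < lollipopLastDist n g u := by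
    unfold lollipopLastDist
    by_cases hup : g - 1 - u ≤ u + 1
    · exact ⟨u + 1, by omega, by omega, by split_ifs <;> omega⟩
    · by_cases hu0 : (u : ℕ) = 0
      · exact ⟨g - 1, by omega, by omega, by split_ifs <;> omega⟩
      · exact ⟨u - 1, by omega, by omega, by split_ifs <;> omega⟩
  exact ⟨⟨w, hwn⟩, lollipop_adj_iff.2 hadj, hlt⟩

theorem lollipop_dist_of_val_eq {n g : ℕ} (hgn : g ≤ n) {v : Fin n} (hv : (v : ℕ) = n - 1)
    (u : Fin n) : (lollipop n g).dist v u = lollipopLastDist n g u := by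
  refine dist_eq_of_adj_le_of_exists_adj_lt (f := fun i : Fin n ↦ lollipopLastDist n g i) ?_
    (fun _ _ ↦ lollipopLastDist_le_add_one_of_adj)
    (fun u hu ↦ exists_adj_lollipopLastDist_lt hgn u (by rwa [Ne, Fin.ext_iff, hv] at hu)) u
  simp only [lollipopLastDist, hv]
  split_ifs <;> omega

theorem vertexDistance_lollipop {n g : ℕ} (hg : 1 ≤ g) (hgn : g ≤ n) {v : Fin n}
    (hv : (v : ℕ) = n - 1) :
    vertexDistance (lollipop n g) v = g ^ 2 / 4 + (n - g) * (n + g - 1) / 2 := by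
  obtain ⟨a, rfl⟩ : ∃ a, n = g + a := ⟨n - g, by omega⟩
  have hcycle : ∀ i ∈ Finset.range (g - 1),
      lollipopLastDist (g + a) g i = a + min (g - 1 - i) (i + 1) := by
    intro i hi
    rw [Finset.mem_range] at hi
    simp only [lollipopLastDist]
    rw [if_neg (by omega)]
    omega
  have hpath : ∀ i ∈ Finset.range (a + 1), lollipopLastDist (g + a) g (g - 1 + i) = a - i := by
    intro i _
    simp only [lollipopLastDist]
    rw [if_pos (by omega)]
    omega
  have hreflect : ∑ i ∈ Finset.range (a + 1), (a - i) = (a + 1) * a / 2 := by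
    simpa [Finset.sum_range_id, Nat.mul_comm] using Finset.sum_range_reflect (fun i ↦ i) (a + 1)
  calc vertexDistance (lollipop (g + a) g) v
      = ∑ i ∈ Finset.range (g - 1 + (a + 1)), lollipopLastDist (g + a) g i := by
        rw [vertexDistance, show g - 1 + (a + 1) = g + a by omega,
          ← Fin.sum_univ_eq_sum_range (lollipopLastDist (g + a) g)]
        exact Finset.sum_congr rfl fun u _ ↦ lollipop_dist_of_val_eq (by omega) hv u
    _ = a * (g - 1) + g ^ 2 / 4 + (a + 1) * a / 2 := by
        rw [Finset.sum_range_add, Finset.sum_congr rfl hcycle, Finset.sum_congr rfl hpath,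
          Finset.sum_add_distrib, hreflect, sum_range_min_sub_add_one, Nat.sub_add_cancel hg]
        simp [Nat.mul_comm]
    _ = g ^ 2 / 4 + (g + a - g) * (g + a + g - 1) / 2 := by
        rw [Nat.add_sub_cancel_left, show a * (g + a + g - 1) = (a + 1) * a + a * (g - 1) * 2 by
          rw [show g + a + g - 1 = a + 1 + (g - 1) * 2 by omega]; ring,
          Nat.add_mul_div_right _ _ (by norm_num)]
        omega

/-- The distance of the pendant vertex of `L_{n,g}` (interpreted as the vertex
`n-1`, which for `g = n` is just a vertex of the cycle `C_n`). -/
theorem stmt3 (n g : ℕ) (hg3 : 3 ≤ g) (hgn : g ≤ n) :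
    vertexDistance (lollipop n g) ⟨n - 1, by omega⟩ =
      (if Even g then g ^ 2 / 4 else (g ^ 2 - 1) / 4)
        + (n - g) * (n + g - 1) / 2 := by
  rw [ite_even_sq_div_four, vertexDistance_lollipop (by omega) hgn rfl]
end

section
/- Let G be a connected graph on n vertices with exactly k cut vertices, where k ≥ 2. Then G has at least two s-pendant blocks. -/
/-!
Blocks are the maximal nonseparable vertex sets. Two facts drive everything: an edge leaving a
block starts at a cut vertex (otherwise the edge extends to an ear of the block), and two blocks
through `a` that meet the same component of `G - a` coincide (their union with a connecting path
is nonseparable).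

Let `A` be a component of `G - a`, for a cut vertex `a`, containing a cut vertex `b`. If some
component of `G - b` avoiding `a` contains a cut vertex, it lies strictly inside `A` and we recurse.
Otherwise take a component `D` of `G - b` avoiding `a`: it has no cut vertex, so `D ∪ {b}` is a
pendant block, and the only non-pendant block through `b` is the one meeting the component of
`a`, so `D ∪ {b}` is s-pendant. Thus `A` contains an s-pendant block. Given cut vertices
`c₁ ≠ c₂`, this gives one s-pendant block inside the component of `c₂` in `G - c₁`, and the same
dichotomy at `c₁` gives a second one inside another component together with `c₁`.
-/

open SimpleGraph

variable {V : Type*}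

namespace SimpleGraph

variable {G : SimpleGraph V}

def ReachableIn (G : SimpleGraph V) (S : Set V) (u v : V) : Prop :=
  ∃ p : G.Walk u v, ∀ x ∈ p.support, x ∈ S

def componentIn (G : SimpleGraph V) (S : Set V) (x : V) : Set V :=
  {y | G.ReachableIn S x y}

namespace ReachableIn

variable {S : Set V} {u v w : V}

lemma mem_right (h : G.ReachableIn S u v) : v ∈ S :=
  h.choose_spec v h.choose.end_mem_support

lemma refl (hu : u ∈ S) : G.ReachableIn S u u :=
  ⟨Walk.nil, by simpa using hu⟩

lemma symm (h : G.ReachableIn S u v) : G.ReachableIn S v u := by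
  obtain ⟨p, hp⟩ := h
  exact ⟨p.reverse, by simpa using hp⟩

lemma trans (h : G.ReachableIn S u v) (h' : G.ReachableIn S v w) : G.ReachableIn S u w := by
  obtain ⟨p, hp⟩ := h
  obtain ⟨q, hq⟩ := h'
  refine ⟨p.append q, fun x hx => ?_⟩
  rw [Walk.mem_support_append_iff] at hx
  exact hx.elim (hp x) (hq x)

lemma exists_isPath [DecidableEq V] (h : G.ReachableIn S u v) :
    ∃ p : G.Walk u v, p.IsPath ∧ ∀ x ∈ p.support, x ∈ S := by
  obtain ⟨p, hp⟩ := h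
  exact ⟨p.bypass, p.bypass_isPath, fun x hx => hp x (p.support_bypass_subset_support hx)⟩

lemma mono {T : Set V} (hST : S ⊆ T) (h : G.ReachableIn S u v) : G.ReachableIn T u v := by
  obtain ⟨p, hp⟩ := h
  exact ⟨p, fun x hx => hST (hp x hx)⟩

end ReachableIn

lemma connected_induce_iff_reachableIn {S : Set V} : (G.induce S).Connected ↔
    S.Nonempty ∧ ∀ u ∈ S, ∀ v ∈ S, G.ReachableIn S u v := by
  rw [connected_induce_iff, Subgraph.connected_iff_forall_exists_walk_subgraph]
  simp only [Subgraph.induce_verts]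
  refine and_congr_right fun _ => ⟨fun h u hu v hv => ?_, fun h u v hu hv => ?_⟩
  · obtain ⟨p, hp⟩ := h hu hv
    exact ⟨p, fun x hx => hp.1 (by rwa [Walk.mem_verts_toSubgraph])⟩
  · obtain ⟨p, hp⟩ := h u hu v hv
    refine ⟨p, fun x hx => hp x (by rwa [Walk.mem_verts_toSubgraph] at hx), fun x y hxy => ?_⟩
    have hx := hp x (by rw [← Walk.mem_verts_toSubgraph]; exact hxy.fst_mem)
    have hy := hp y (by rw [← Walk.mem_verts_toSubgraph]; exact hxy.snd_mem)
    simp [Subgraph.induce_adj, hx, hy, p.toSubgraph.adj_sub hxy]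

lemma connected_induce_of_reachableIn {S : Set V} {s : V} (hs : s ∈ S)
    (h : ∀ u ∈ S, G.ReachableIn S s u) : (G.induce S).Connected :=
  connected_induce_iff_reachableIn.mpr ⟨⟨s, hs⟩, fun u hu v hv => (h u hu).symm.trans (h v hv)⟩

section componentIn

variable {S : Set V} {x y : V}

lemma componentIn_subset : G.componentIn S x ⊆ S := fun _ h => h.mem_right

lemma mem_componentIn_self (hx : x ∈ S) : x ∈ G.componentIn S x := ReachableIn.refl hx

lemma componentIn_eq_of_mem (h : y ∈ G.componentIn S x) : G.componentIn S y = G.componentIn S x :=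
  Set.ext fun _ => ⟨h.trans, h.symm.trans⟩

lemma connected_componentIn (hx : x ∈ S) : (G.induce (G.componentIn S x)).Connected := by
  classical
  refine connected_induce_of_reachableIn (mem_componentIn_self hx) fun u ⟨p, hp⟩ => ?_
  refine ⟨p, fun z hz => ⟨p.takeUntil z hz, fun w hw => hp w ?_⟩⟩
  exact p.support_takeUntil_subset_support hz hw

lemma Connected.subset_componentIn {T : Set V} (hT : (G.induce T).Connected) (hTS : T ⊆ S)
    (hx : x ∈ T) : T ⊆ G.componentIn S x := fun y hy =>
  ((connected_induce_iff_reachableIn.mp hT).2 x hx y hy).mono hTS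

lemma ne_of_mem_componentIn {b : V} (h : y ∈ G.componentIn {b}ᶜ x) : y ≠ b :=
  componentIn_subset h

end componentIn

section cutVertex

variable {a b x y : V}

lemma exists_adj_componentIn (hG : G.Connected) (hx : x ≠ b) :
    ∃ w ∈ G.componentIn {b}ᶜ x, G.Adj b w := by
  classical
  obtain ⟨p⟩ := hG.preconnected b x
  obtain ⟨q, hq⟩ := p.toPath
  cases q with
  | nil => exact absurd rfl hx
  | cons h r =>
    rw [Walk.cons_isPath_iff] at hq
    exact ⟨_, ReachableIn.symm ⟨r, fun z hz hzb => hq.2 (hzb ▸ hz)⟩, h⟩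

lemma connected_componentIn_union (hG : G.Connected) (hx : x ≠ b) :
    (G.induce (G.componentIn {b}ᶜ x ∪ {b})).Connected := by
  obtain ⟨w, hw, hbw⟩ := exists_adj_componentIn hG hx
  exact connected_induce_union (connected_componentIn hx).preconnected
    Preconnected.of_subsingleton hw rfl hbw.symm

lemma componentIn_union_subset (hG : G.Connected) (hb : b ∈ G.componentIn {a}ᶜ x) (hy : y ≠ b)
    (ha : a ∉ G.componentIn {b}ᶜ y) : G.componentIn {b}ᶜ y ∪ {b} ⊆ G.componentIn {a}ᶜ x := by
  rw [← componentIn_eq_of_mem hb]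
  refine (connected_componentIn_union hG hy).subset_componentIn ?_ (Or.inr rfl)
  rintro z (hz | rfl)
  · exact fun hza => ha (hza ▸ hz)
  · exact ne_of_mem_componentIn hb

lemma _root_.IsCutVertex.exists_componentIn_ne (hb : IsCutVertex G b) (hx : x ≠ b) :
    ∃ y ≠ b, G.componentIn {b}ᶜ y ≠ G.componentIn {b}ᶜ x := by
  by_contra! h
  exact hb (connected_induce_of_reachableIn hx fun u hu =>
    show u ∈ G.componentIn {b}ᶜ x from h u hu ▸ mem_componentIn_self hu)

end cutVertex

def IsNonseparable (G : SimpleGraph V) (S : Set V) : Prop :=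
  (G.induce S).Connected ∧ ∀ v ∈ S, (G.induce (S \ {v})).Connected

def induceInduceComplSingletonIso (S : Set V) (v : S) :
    (G.induce S).induce ({v}ᶜ : Set S) ≃g G.induce (S \ {(v : V)}) where
  toFun x := ⟨x.1.1, x.1.2, fun h => x.2 (Subtype.ext h)⟩
  invFun y := ⟨⟨y.1, y.2.1⟩, fun h => y.2.2 (congrArg Subtype.val h)⟩
  left_inv _ := rfl
  right_inv _ := rfl
  map_rel_iff' := Iff.rfl

lemma isCutVertex_induce_iff {S : Set V} (v : S) :
    IsCutVertex (G.induce S) v ↔ ¬ (G.induce (S \ {(v : V)})).Connected :=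
  not_congr (induceInduceComplSingletonIso S v).connected_iff

lemma isBlock_iff {B : Set V} :
    IsBlock G B ↔ 2 ≤ B.ncard ∧ G.IsNonseparable B ∧ ∀ C, B ⊆ C → G.IsNonseparable C → C = B := by
  have hsep : ∀ S : Set V, (∀ v : S, ¬ IsCutVertex (G.induce S) v) ↔
      ∀ v ∈ S, (G.induce (S \ {v})).Connected := fun S => by
    simp only [isCutVertex_induce_iff, not_not, Subtype.forall]
  simp only [IsBlock, IsNonseparable, hsep, and_imp, and_assoc]

namespace IsNonseparable

variable {S : Set V}

lemma connected_diff (h : G.IsNonseparable S) (w : V) : (G.induce (S \ {w})).Connected := by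
  by_cases hw : w ∈ S
  · exact h.2 w hw
  · rw [Set.sdiff_singleton_eq_self hw]
    exact h.1

lemma diff_subset_componentIn (h : G.IsNonseparable S) {a z : V} (hz : z ∈ S) (hza : z ≠ a) :
    S \ {a} ⊆ G.componentIn {a}ᶜ z :=
  (h.connected_diff a).subset_componentIn (fun _ hw => hw.2) ⟨hz, hza⟩

lemma exists_isBlock_superset [Finite V] (hS : G.IsNonseparable S) (h2 : 2 ≤ S.ncard) :
    ∃ B, IsBlock G B ∧ S ⊆ B := by
  obtain ⟨B, ⟨hSB, hB⟩, hmax⟩ :=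
    Set.Finite.exists_maximalFor Set.ncard _ (Set.toFinite {C | S ⊆ C ∧ G.IsNonseparable C})
      ⟨S, subset_rfl, hS⟩
  refine ⟨B, isBlock_iff.mpr ⟨h2.trans (Set.ncard_le_ncard hSB), hB, fun C hBC hC => ?_⟩, hSB⟩
  exact (Set.eq_of_subset_of_ncard_le hBC (hmax ⟨hSB.trans hBC, hC⟩ (Set.ncard_le_ncard hBC))).symm

end IsNonseparable

lemma isNonseparable_pair {u v : V} (h : G.Adj u v) : G.IsNonseparable {u, v} := by
  have key : ∀ {u v : V}, u ≠ v → (G.induce ({u, v} \ {u})).Connected := fun huv => by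
    rw [Set.insert_sdiff_self_of_notMem (s := {_}) huv, induce_singleton_eq_top]
    exact connected_top
  refine ⟨induce_pair_connected_of_adj h, fun w hw => ?_⟩
  rcases hw with rfl | rfl
  · exact key h.ne
  · rw [Set.pair_comm]
    exact key h.ne'

lemma _root_.IsBlock.isNonseparable {B : Set V} (h : IsBlock G B) : G.IsNonseparable B :=
  (isBlock_iff.mp h).2.1

lemma _root_.IsBlock.eq_of_subset {B C : Set V} (h : IsBlock G B) (hBC : B ⊆ C)
    (hC : G.IsNonseparable C) : C = B :=
  (isBlock_iff.mp h).2.2 C hBC hC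

lemma Walk.IsPath.reachableIn_start_or_end {u v w z : V} {P : G.Walk u v} (hP : P.IsPath)
    (hz : z ∈ P.support) (hzw : z ≠ w) :
    G.ReachableIn ({x | x ∈ P.support} \ {w}) z u ∨
      G.ReachableIn ({x | x ∈ P.support} \ {w}) z v := by
  classical
  have hP' : ((P.takeUntil z hz).append (P.dropUntil z hz)).IsPath := by rwa [P.take_spec hz]
  by_cases hw : w ∈ (P.takeUntil z hz).support
  · refine Or.inr ⟨P.dropUntil z hz, fun x hx => ⟨P.support_dropUntil_subset_support hz hx, ?_⟩⟩
    rintro rfl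
    exact hP'.ne_of_mem_support_of_append hzw.symm hw hx rfl
  · refine Or.inl ⟨(P.takeUntil z hz).reverse, fun x hx => ?_⟩
    rw [Walk.support_reverse, List.mem_reverse] at hx
    exact ⟨P.support_takeUntil_subset_support hz hx, fun hxw => hw (hxw ▸ hx)⟩

lemma connected_induce_union_support_diff {S : Set V} {u v w : V}
    (hS : (G.induce (S \ {w})).Connected) {P : G.Walk u v} (hP : P.IsPath) (hu : u ∈ S)
    (hv : v ∈ S) : (G.induce ((S ∪ {x | x ∈ P.support}) \ {w})).Connected := by
  obtain ⟨⟨s₀, hs₀⟩, hreach⟩ := connected_induce_iff_reachableIn.mp hS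
  have hS' : S \ {w} ⊆ (S ∪ {x | x ∈ P.support}) \ {w} :=
    Set.sdiff_subset_sdiff_left Set.subset_union_left
  have hP' : {x | x ∈ P.support} \ {w} ⊆ (S ∪ {x | x ∈ P.support}) \ {w} :=
    Set.sdiff_subset_sdiff_left Set.subset_union_right
  refine connected_induce_of_reachableIn (hS' hs₀) ?_
  rintro z ⟨hz | hz, hzw⟩
  · exact (hreach s₀ hs₀ z ⟨hz, hzw⟩).mono hS'
  · rcases hP.reachableIn_start_or_end hz hzw with h | h
    · exact ((hreach s₀ hs₀ u ⟨hu, h.mem_right.2⟩).mono hS').trans (h.mono hP').symm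
    · exact ((hreach s₀ hs₀ v ⟨hv, h.mem_right.2⟩).mono hS').trans (h.mono hP').symm

lemma IsNonseparable.union_support {S : Set V} (hS : G.IsNonseparable S) {u v : V}
    {P : G.Walk u v} (hP : P.IsPath) (hu : u ∈ S) (hv : v ∈ S) :
    G.IsNonseparable (S ∪ {x | x ∈ P.support}) :=
  ⟨induce_union_connected hS.1.preconnected P.connected_induce_support.preconnected
      ⟨u, hu, P.start_mem_support⟩,
    fun w _ => connected_induce_union_support_diff (hS.connected_diff w) hP hu hv⟩

lemma _root_.IsBlock.isCutVertex_of_adj {B : Set V} {s t : V} (hB : IsBlock G B) (ht : t ∈ B)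
    (hs : s ∉ B) (hts : G.Adj t s) : IsCutVertex G t := by
  classical
  intro hconn
  obtain ⟨b, hbB, hbt⟩ := Set.exists_ne_of_one_lt_ncard hB.1 t
  obtain ⟨p, hp, hpt⟩ :=
    ((connected_induce_iff_reachableIn.mp hconn).2 s hts.ne' b hbt).exists_isPath
  have hpath : (Walk.cons hts p).IsPath :=
    Walk.cons_isPath_iff _ _ |>.mpr ⟨hp, fun h => hpt t h rfl⟩
  have hC := hB.eq_of_subset Set.subset_union_left (hB.isNonseparable.union_support hpath ht hbB)
  exact hs (hC ▸ Or.inr (by simp))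

lemma IsNonseparable.union_union_support {S T : Set V} {a x y : V} (hS : G.IsNonseparable S)
    (hT : G.IsNonseparable T) (haS : a ∈ S) (haT : a ∈ T) (hx : x ∈ S) (hy : y ∈ T)
    {P : G.Walk x y} (hP : P.IsPath) (hPa : ∀ z ∈ P.support, z ≠ a) :
    G.IsNonseparable (S ∪ T ∪ {z | z ∈ P.support}) := by
  refine ⟨induce_union_connected (induce_union_connected hS.1.preconnected hT.1.preconnected
    ⟨a, haS, haT⟩).preconnected P.connected_induce_support.preconnected
    ⟨x, Or.inl hx, P.start_mem_support⟩, fun w _ => ?_⟩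
  by_cases hwa : w = a
  · subst hwa
    have hsplit : (S ∪ T ∪ {z | z ∈ P.support}) \ {w} =
        (S \ {w} ∪ {z | z ∈ P.support}) ∪ T \ {w} := by
      ext z
      have := hPa z
      simp only [Set.mem_sdiff, Set.mem_union, Set.mem_singleton_iff, Set.mem_ofPred_eq]
      tauto
    rw [hsplit]
    exact induce_union_connected (induce_union_connected (hS.connected_diff w).preconnected
      P.connected_induce_support.preconnected
      ⟨x, ⟨hx, hPa x P.start_mem_support⟩, P.start_mem_support⟩).preconnected
      (hT.connected_diff w).preconnected ⟨y, Or.inr P.end_mem_support, hy, hPa y P.end_mem_support⟩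
  · refine connected_induce_union_support_diff ?_ hP (Or.inl hx) (Or.inr hy)
    rw [Set.union_sdiff_distrib]
    exact induce_union_connected (hS.connected_diff w).preconnected
      (hT.connected_diff w).preconnected ⟨a, ⟨haS, Ne.symm hwa⟩, haT, Ne.symm hwa⟩

lemma _root_.IsBlock.eq_of_reachableIn {B₁ B₂ : Set V} {a x y : V} (h₁ : IsBlock G B₁)
    (h₂ : IsBlock G B₂) (ha₁ : a ∈ B₁) (ha₂ : a ∈ B₂) (hx : x ∈ B₁) (hy : y ∈ B₂)
    (hxy : G.ReachableIn {a}ᶜ x y) : B₁ = B₂ := by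
  classical
  obtain ⟨P, hP, hPa⟩ := hxy.exists_isPath
  have hC := h₁.isNonseparable.union_union_support h₂.isNonseparable ha₁ ha₂ hx hy hP hPa
  exact (h₁.eq_of_subset (fun z hz => Or.inl (Or.inl hz)) hC).symm.trans
    (h₂.eq_of_subset (fun z hz => Or.inl (Or.inr hz)) hC)

section componentBlock

variable {a b x y : V}

lemma isNonseparable_componentIn_union (hG : G.Connected) (hx : x ≠ a)
    (hfree : ∀ z ∈ G.componentIn {a}ᶜ x, ¬ IsCutVertex G z) :
    G.IsNonseparable (G.componentIn {a}ᶜ x ∪ {a}) := by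
  classical
  set A := G.componentIn {a}ᶜ x
  refine ⟨connected_componentIn_union hG hx, ?_⟩
  rintro v (hv | rfl)
  · have hva : v ≠ a := ne_of_mem_componentIn hv
    have ha : a ∈ (A ∪ {a}) \ {v} := ⟨Or.inr rfl, hva.symm⟩
    obtain ⟨-, hGv⟩ := connected_induce_iff_reachableIn.mp (not_not.mp (hfree v hv))
    refine connected_induce_of_reachableIn ha ?_
    rintro u ⟨hu | rfl, huv⟩
    · -- a path from `a` to `u` in `G - v` stays inside `A` after its first edge
      obtain ⟨q, hq, hqv⟩ := (hGv a hva.symm u huv).exists_isPath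
      cases q with
      | nil => exact absurd rfl (ne_of_mem_componentIn hu)
      | cons h r =>
        rw [Walk.cons_isPath_iff] at hq
        have hrA : {z | z ∈ r.support} ⊆ G.componentIn {a}ᶜ u :=
          r.connected_induce_support.subset_componentIn
            (fun z hz hza => hq.2 (hza ▸ hz)) r.end_mem_support
        rw [componentIn_eq_of_mem hu] at hrA
        refine ⟨Walk.cons h r, fun z hz => ⟨?_, hqv z hz⟩⟩
        rw [Walk.support_cons, List.mem_cons] at hz
        exact hz.elim Or.inr (fun hz => Or.inl (hrA hz))
    · exact ReachableIn.refl ha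
  · rw [Set.union_sdiff_right, Set.sdiff_singleton_eq_self (fun h => ne_of_mem_componentIn h rfl)]
    exact connected_componentIn hx

lemma isBlock_componentIn_union [Finite V] (hG : G.Connected) (hx : x ≠ a)
    (hfree : ∀ z ∈ G.componentIn {a}ᶜ x, ¬ IsCutVertex G z) :
    IsBlock G (G.componentIn {a}ᶜ x ∪ {a}) := by
  have hxA : x ∈ G.componentIn {a}ᶜ x := mem_componentIn_self hx
  refine isBlock_iff.mpr ⟨?_, isNonseparable_componentIn_union hG hx hfree, fun C hsub hC => ?_⟩
  · rw [← Set.ncard_pair hx]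
    exact Set.ncard_le_ncard (Set.pair_subset (Or.inl hxA) (Or.inr rfl))
  · refine hsub.antisymm' fun t ht => ?_
    by_cases hta : t = a
    · exact Or.inr hta
    · exact Or.inl (hC.diff_subset_componentIn (hsub (Or.inl hxA)) hx ⟨ht, hta⟩)

lemma isPendantBlock_componentIn_union [Finite V] (hG : G.Connected) (hb : IsCutVertex G b)
    (hx : x ≠ b) (hfree : ∀ z ∈ G.componentIn {b}ᶜ x, ¬ IsCutVertex G z) :
    IsPendantBlock G (G.componentIn {b}ᶜ x ∪ {b}) := by
  refine ⟨isBlock_componentIn_union hG hx hfree, Set.ncard_eq_one.mpr ⟨b, ?_⟩⟩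
  refine Set.eq_singleton_iff_unique_mem.mpr ⟨⟨Or.inr rfl, hb⟩, ?_⟩
  rintro v ⟨hv | hv, hvcut⟩
  exacts [absurd hvcut (hfree v hv), hv]

lemma _root_.IsBlock.exists_isCutVertex_ne {B : Set V} (hB : IsBlock G B)
    (hBA : B \ {a} ⊆ G.componentIn {a}ᶜ x) {c : V} (hc : c ∈ G.componentIn {a}ᶜ x)
    (hcut : IsCutVertex G c) : ∃ t ∈ B, t ≠ a ∧ IsCutVertex G t := by
  by_cases hcB : c ∈ B
  · exact ⟨c, hcB, ne_of_mem_componentIn hc, hcut⟩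
  obtain ⟨z, hzB, hza⟩ := Set.exists_ne_of_one_lt_ncard hB.1 a
  obtain ⟨p, hp⟩ := (hBA ⟨hzB, hza⟩).symm.trans hc
  obtain ⟨d, hd, hd₁, hd₂⟩ := p.exists_boundary_dart B hzB hcB
  exact ⟨d.fst, hd₁, hp _ (p.dart_fst_mem_support_of_mem_darts hd),
    hB.isCutVertex_of_adj hd₁ hd₂ d.adj⟩

/-- The blocks through `b` are the pendant blocks `D ∪ {b}`, for the components `D` of `G - b`
without cut vertices, and the single block through `b` meeting the component of `x`. -/
lemma ncard_nonpendant_blocks_eq_one [Finite V] (hG : G.Connected) (hb : IsCutVertex G b)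
    (hx : x ≠ b) (hcut : ∃ c ∈ G.componentIn {b}ᶜ x, IsCutVertex G c)
    (huniq : ∀ y ≠ b, (∃ c ∈ G.componentIn {b}ᶜ y, IsCutVertex G c) →
      G.componentIn {b}ᶜ y = G.componentIn {b}ᶜ x) :
    {C : Set V | IsBlock G C ∧ ¬ IsPendantBlock G C ∧ b ∈ C}.ncard = 1 := by
  obtain ⟨w, hw, hbw⟩ := exists_adj_componentIn hG hx
  obtain ⟨B₀, hB₀, hbwB₀⟩ := (isNonseparable_pair hbw).exists_isBlock_superset
    (Set.ncard_pair hbw.ne).ge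
  have hbB₀ : b ∈ B₀ := hbwB₀ (Or.inl rfl)
  have hwB₀ : w ∈ B₀ := hbwB₀ (Or.inr rfl)
  have hB₀A : B₀ \ {b} ⊆ G.componentIn {b}ᶜ x := componentIn_eq_of_mem hw ▸
    hB₀.isNonseparable.diff_subset_componentIn hwB₀ (ne_of_mem_componentIn hw)
  refine Set.ncard_eq_one.mpr ⟨B₀, Set.eq_singleton_iff_unique_mem.mpr ⟨⟨hB₀, ?_, hbB₀⟩, ?_⟩⟩
  · rintro ⟨-, hcard⟩
    obtain ⟨c, hc, hccut⟩ := hcut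
    obtain ⟨t, htB₀, htb, htcut⟩ := hB₀.exists_isCutVertex_ne hB₀A hc hccut
    have : ({b, t} : Set V).ncard ≤ {v ∈ B₀ | IsCutVertex G v}.ncard :=
      Set.ncard_le_ncard (Set.pair_subset ⟨hbB₀, hb⟩ ⟨htB₀, htcut⟩)
    rw [Set.ncard_pair htb.symm] at this
    omega
  · rintro C ⟨hC, hCnp, hbC⟩
    obtain ⟨z, hzC, hzb⟩ := Set.exists_ne_of_one_lt_ncard hC.1 b
    by_cases hD : ∃ c ∈ G.componentIn {b}ᶜ z, IsCutVertex G c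
    · have hzA : z ∈ G.componentIn {b}ᶜ x := huniq z hzb hD ▸ mem_componentIn_self hzb
      exact hC.eq_of_reachableIn hB₀ hbC hbB₀ hzC hwB₀ (hzA.symm.trans hw)
    · push Not at hD
      have hCD := hC.eq_of_reachableIn (isBlock_componentIn_union hG hzb hD) hbC (Or.inr rfl)
        hzC (Or.inl (mem_componentIn_self hzb)) (ReachableIn.refl hzb)
      exact absurd (hCD ▸ isPendantBlock_componentIn_union hG hb hzb hD) hCnp

lemma isSPendantBlock_componentIn_union [Finite V] (hG : G.Connected) (hb : IsCutVertex G b)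
    (hx : x ≠ b) (hcut : ∃ c ∈ G.componentIn {b}ᶜ x, IsCutVertex G c)
    (huniq : ∀ y ≠ b, (∃ c ∈ G.componentIn {b}ᶜ y, IsCutVertex G c) →
      G.componentIn {b}ᶜ y = G.componentIn {b}ᶜ x)
    (hy : y ≠ b) (hfree : ∀ z ∈ G.componentIn {b}ᶜ y, ¬ IsCutVertex G z) :
    IsSPendantBlock G (G.componentIn {b}ᶜ y ∪ {b}) := by
  refine ⟨isPendantBlock_componentIn_union hG hb hy hfree, ?_⟩
  rintro w (hw | rfl) hwcut
  exacts [absurd hwcut (hfree w hw), ncard_nonpendant_blocks_eq_one hG hb hx hcut huniq]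

end componentBlock

/-- `ih` provides s-pendant blocks inside the other components of `G - b` that contain cut
vertices; if there are none, any other component `D` gives the s-pendant block `D ∪ {b}`. -/
lemma exists_isSPendantBlock_of_isCutVertex [Finite V] {b x : V} (hG : G.Connected)
    (hb : IsCutVertex G b) (hx : x ≠ b) (hcut : ∃ c ∈ G.componentIn {b}ᶜ x, IsCutVertex G c)
    (ih : ∀ y ≠ b, G.componentIn {b}ᶜ y ≠ G.componentIn {b}ᶜ x →
      (∃ c ∈ G.componentIn {b}ᶜ y, IsCutVertex G c) →
        ∃ B, IsSPendantBlock G B ∧ B ⊆ G.componentIn {b}ᶜ y) :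
    ∃ y ≠ b, G.componentIn {b}ᶜ y ≠ G.componentIn {b}ᶜ x ∧
      ∃ B, IsSPendantBlock G B ∧ B ⊆ G.componentIn {b}ᶜ y ∪ {b} := by
  by_cases h : ∃ y ≠ b, G.componentIn {b}ᶜ y ≠ G.componentIn {b}ᶜ x ∧
      ∃ c ∈ G.componentIn {b}ᶜ y, IsCutVertex G c
  · obtain ⟨y, hyb, hne, hc⟩ := h
    obtain ⟨B, hB, hBsub⟩ := ih y hyb hne hc
    exact ⟨y, hyb, hne, B, hB, hBsub.trans Set.subset_union_left⟩
  · push Not at h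
    obtain ⟨y, hyb, hne⟩ := hb.exists_componentIn_ne hx
    refine ⟨y, hyb, hne, _, isSPendantBlock_componentIn_union hG hb hx hcut ?_ hyb (h y hyb hne),
      subset_rfl⟩
    intro y' hy' ⟨c, hc, hccut⟩
    by_contra hne'
    exact h y' hy' hne' c hc hccut

lemma exists_isSPendantBlock_subset_componentIn [Finite V] (hG : G.Connected) {a x : V}
    (ha : IsCutVertex G a) (hx : x ≠ a) (hcut : ∃ c ∈ G.componentIn {a}ᶜ x, IsCutVertex G c) :
    ∃ B, IsSPendantBlock G B ∧ B ⊆ G.componentIn {a}ᶜ x := by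
  induction hn : (G.componentIn {a}ᶜ x).ncard using Nat.strong_induction_on generalizing a x with
  | _ n ih =>
  obtain ⟨b, hbA, hbcut⟩ := hcut
  have hab : a ≠ b := (ne_of_mem_componentIn hbA).symm
  have hsub : ∀ y ≠ b, G.componentIn {b}ᶜ y ≠ G.componentIn {b}ᶜ a →
      G.componentIn {b}ᶜ y ∪ {b} ⊆ G.componentIn {a}ᶜ x := fun y hy hne =>
    componentIn_union_subset hG hbA hy fun h => hne (componentIn_eq_of_mem h).symm
  obtain ⟨y, hy, hne, B, hB, hBsub⟩ := exists_isSPendantBlock_of_isCutVertex hG hbcut hab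
    ⟨a, mem_componentIn_self hab, ha⟩ fun y hy hne hc => by
      have hlt : (G.componentIn {b}ᶜ y).ncard < n := hn ▸ Set.ncard_lt_ncard
        (Set.ssubset_iff_of_subset (Set.subset_union_left.trans (hsub y hy hne)) |>.mpr
          ⟨b, hbA, fun h => ne_of_mem_componentIn h rfl⟩)
      exact ih _ hlt hbcut hy hc rfl
  exact ⟨B, hB, hBsub.trans (hsub y hy hne)⟩

end SimpleGraph

/-- A connected graph with at least two cut vertices has at least two
s-pendant blocks. -/
theorem stmt4 (n k : ℕ) (hk : 2 ≤ k) (G : SimpleGraph (Fin n))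
    (hG : G.Connected) (hcut : cutVertexCount G = k) :
    ∃ B₁ B₂ : Set (Fin n), B₁ ≠ B₂ ∧
      IsSPendantBlock G B₁ ∧ IsSPendantBlock G B₂ := by
  obtain ⟨c₁, c₂, hc₁, hc₂, hc⟩ := (Set.one_lt_ncard_iff (Set.toFinite _)).mp
    (show 1 < {v | IsCutVertex G v}.ncard by rw [← cutVertexCount, hcut]; omega)
  have hA : ∃ c ∈ G.componentIn {c₁}ᶜ c₂, IsCutVertex G c :=
    ⟨c₂, mem_componentIn_self (Ne.symm hc), hc₂⟩
  obtain ⟨B₁, hB₁, hB₁A⟩ := exists_isSPendantBlock_subset_componentIn hG hc₁ (Ne.symm hc) hA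
  obtain ⟨y, -, hne, B₂, hB₂, hB₂sub⟩ := exists_isSPendantBlock_of_isCutVertex hG hc₁
    (Ne.symm hc) hA fun y hy _ => exists_isSPendantBlock_subset_componentIn hG hc₁ hy
  refine ⟨B₁, B₂, ?_, hB₁, hB₂⟩
  rintro rfl
  obtain ⟨z, hz⟩ := Set.nonempty_of_ncard_ne_zero (s := B₁) (by have := hB₁.1.1.1; omega)
  rcases hB₂sub hz with hzY | rfl
  · exact hne ((componentIn_eq_of_mem hzY).symm.trans (componentIn_eq_of_mem (hB₁A hz)))
  · exact ne_of_mem_componentIn (hB₁A hz) rfl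
end

section
/- Let k ≥ 1, n ≥ k + 3, let u be the pendant vertex of L_{n,n−k} and let v be any non-pendant vertex of L_{n,n−k}. Then D_{L_{n,n−k}}(u) > D_{L_{n,n−k}}(v). -/
open SimpleGraph

variable {V : Type*}

/-!
Distances in `L_{n,g}` are explicit: on the cycle `0, …, g-1` they are the cyclic distances
`min (|a - b|) (g - |a - b|)`, and the path vertex `g - 1 + h` lies at height `h` above the cycle.
Write `n = g + k`, `T = 0 + 1 + ⋯ + (k - 1)` and `C` for the transmission of a cycle vertex inside
the cycle, which does not depend on the vertex by rotation. The pendant vertex has distance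
`C + g k + T`. A cycle vertex at cyclic distance `d ≤ g - 2` from `g - 1` has `C + k (d + 1) + T`,
and a path vertex at height `h < k` has at most `C + g h + T`, because within a path the sum of
distances is largest from an endpoint.
-/

open Finset

theorem SimpleGraph.dist_eq_of_lipschitz_of_exists_adj_lt (G : SimpleGraph V) {F : V → ℕ}
    {a : V} (h₀ : F a = 0) (hle : ∀ b c, G.Adj b c → F c ≤ F b + 1)
    (hdesc : ∀ b, b ≠ a → ∃ c, G.Adj b c ∧ F c < F b) (b : V) :
    G.dist a b = F b := by
  have walk_ge : ∀ {x y : V} (w : G.Walk x y), F y ≤ F x + w.length := by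
    intro x y w
    induction w with
    | nil => simp
    | cons h _ ih => have := hle _ _ h; rw [Walk.length_cons]; omega
  have exists_short_walk : ∀ m b, F b = m → ∃ w : G.Walk a b, w.length ≤ F b := by
    intro m
    induction m using Nat.strong_induction_on with
    | _ m ih =>
      intro b hb
      by_cases hba : b = a
      · subst hba; exact ⟨Walk.nil, by simp⟩
      obtain ⟨c, hbc, hc⟩ := hdesc b hba
      obtain ⟨w, hw⟩ := ih (F c) (hb ▸ hc) c rfl
      exact ⟨w.concat hbc.symm, by rw [Walk.length_concat]; omega⟩
  obtain ⟨w, hw⟩ := exists_short_walk _ b rfl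
  obtain ⟨p, hp⟩ := w.reachable.exists_walk_length_eq_dist
  have := walk_ge p
  have := G.dist_le w
  omega

def cycleDist (g a b : ℕ) : ℕ := min (Nat.dist a b) (g - Nat.dist a b)

/-- Vertices `b ≥ g` lie on the pendant path, at distance `b - (g - 1)` from the cycle. -/
def lollipopDist (g a b : ℕ) : ℕ :=
  if a < g then
    if b < g then cycleDist g a b else cycleDist g a (g - 1) + (b - (g - 1))
  else
    if b < g then cycleDist g b (g - 1) + (a - (g - 1)) else Nat.dist a b

theorem cycleDist_comm (g a b : ℕ) : cycleDist g a b = cycleDist g b a := by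
  simp only [cycleDist, Nat.dist_comm]

def LollipopAdj (g b c : ℕ) : Prop :=
  b + 1 = c ∨ c + 1 = b ∨ (b = 0 ∧ c = g - 1) ∨ (c = 0 ∧ b = g - 1)

theorem exists_cycleDist_lt {g b t : ℕ} (hb : b < g) (ht : t < g) (hbt : b ≠ t) :
    ∃ c < g, c ≠ b ∧ LollipopAdj g b c ∧ cycleDist g c t < cycleDist g b t := by
  by_cases hshort : Nat.dist b t ≤ g - Nat.dist b t
  all_goals unfold LollipopAdj cycleDist Nat.dist at *
  · rcases Nat.lt_or_gt_of_ne hbt with h | h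
    · exact ⟨b + 1, by omega, by omega, by omega, by omega⟩
    · exact ⟨b - 1, by omega, by omega, by omega, by omega⟩
  · rcases Nat.lt_or_gt_of_ne hbt with h | h
    · rcases Nat.eq_zero_or_pos b with rfl | hb0
      · exact ⟨g - 1, by omega, by omega, by omega, by omega⟩
      · exact ⟨b - 1, by omega, by omega, by omega, by omega⟩
    · by_cases hbg : b = g - 1
      · exact ⟨0, by omega, by omega, by omega, by omega⟩
      · exact ⟨b + 1, by omega, by omega, by omega, by omega⟩

theorem exists_lollipopDist_lt {n g a b : ℕ} (hgn : g ≤ n) (ha : a < n) (hb : b < n)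
    (hab : a ≠ b) :
    ∃ c < n, c ≠ b ∧ LollipopAdj g b c ∧ lollipopDist g a c < lollipopDist g a b := by
  by_cases hbg : g ≤ b
  · rcases Nat.lt_or_gt_of_ne hab with h | h
    · refine ⟨b - 1, by omega, by omega, by unfold LollipopAdj; omega, ?_⟩
      unfold lollipopDist cycleDist Nat.dist
      split_ifs <;> omega
    · refine ⟨b + 1, by omega, by omega, by unfold LollipopAdj; omega, ?_⟩
      unfold lollipopDist cycleDist Nat.dist
      split_ifs <;> omega
  by_cases hag : g ≤ a
  · by_cases hb' : b = g - 1
    · refine ⟨g, by omega, by omega, by unfold LollipopAdj; omega, ?_⟩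
      unfold lollipopDist cycleDist Nat.dist
      split_ifs <;> omega
    obtain ⟨c, hc, hcb, hadj, hlt⟩ := exists_cycleDist_lt (by omega) (by omega : g - 1 < g) hb'
    refine ⟨c, by omega, hcb, hadj, ?_⟩
    simp only [lollipopDist, if_neg (not_lt.mpr hag), if_pos hc, if_pos (show b < g by omega)]
    omega
  · obtain ⟨c, hc, hcb, hadj, hlt⟩ :=
      exists_cycleDist_lt (by omega) (by omega : a < g) (Ne.symm hab)
    refine ⟨c, by omega, hcb, hadj, ?_⟩
    simp only [lollipopDist, if_pos (show a < g by omega), if_pos hc, if_pos (show b < g by omega)]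
    rwa [cycleDist_comm g a c, cycleDist_comm g a b]

theorem lollipop_dist {n g : ℕ} (hgn : g ≤ n) (a b : Fin n) :
    (lollipop n g).dist a b = lollipopDist g a b := by
  refine (lollipop n g).dist_eq_of_lipschitz_of_exists_adj_lt
    (F := fun b : Fin n ↦ lollipopDist g a b) ?_ ?_ ?_ b
  · simp only [lollipopDist, cycleDist, Nat.dist]; split_ifs <;> omega
  · intro b c hbc
    simp only [lollipop, fromRel_adj, ne_eq, Fin.ext_iff] at hbc
    simp only [lollipopDist, cycleDist, Nat.dist]; split_ifs <;> omega
  · rintro ⟨b, hb⟩ hba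
    obtain ⟨c, hc, hcb, hadj, hlt⟩ :=
      exists_lollipopDist_lt hgn a.isLt hb (fun h ↦ hba (Fin.ext h.symm))
    refine ⟨⟨c, hc⟩, ?_, hlt⟩
    simp only [lollipop, fromRel_adj, ne_eq, Fin.ext_iff]
    unfold LollipopAdj at hadj
    omega

theorem sum_range_cycleDist_succ {g a : ℕ} (ha : a + 1 < g) :
    ∑ i ∈ range g, cycleDist g (a + 1) i = ∑ i ∈ range g, cycleDist g a i := by
  obtain ⟨m, rfl⟩ : ∃ m, g = m + 1 := ⟨g - 1, by omega⟩
  rw [sum_range_succ', sum_range_succ]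
  congr 1
  · exact sum_congr rfl fun i _ ↦ by simp only [cycleDist, Nat.dist]; omega
  · simp only [cycleDist, Nat.dist]; omega

theorem sum_range_cycleDist_eq {g a : ℕ} (ha : a < g) :
    ∑ i ∈ range g, cycleDist g a i = ∑ i ∈ range g, cycleDist g 0 i := by
  induction a with
  | zero => rfl
  | succ a ih => rw [sum_range_cycleDist_succ ha, ih (by omega)]

theorem sum_range_dist_pred (k : ℕ) :
    ∑ t ∈ range k, Nat.dist (k - 1) t = ∑ t ∈ range k, t := by
  rw [← sum_range_reflect (fun t ↦ t) k]
  exact sum_congr rfl fun t ht ↦ by simp only [mem_range] at ht; unfold Nat.dist; omega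

theorem sum_range_dist_le {s k : ℕ} (hs : s < k) :
    ∑ t ∈ range k, Nat.dist s t ≤ ∑ t ∈ range k, t := by
  induction k with
  | zero => omega
  | succ k ih =>
    rcases Nat.lt_succ_iff_lt_or_eq.mp hs with hs | rfl
    · have hsk : Nat.dist s k ≤ k := by unfold Nat.dist; omega
      rw [sum_range_succ, sum_range_succ]
      exact Nat.add_le_add (ih hs) hsk
    · exact (sum_range_dist_pred (s + 1)).le

theorem sum_range_lollipopDist_cycle {g : ℕ} (hg : 0 < g) (a : ℕ) :
    ∑ i ∈ range g, lollipopDist g a i =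
      ∑ i ∈ range g, cycleDist g 0 i + g * (a - (g - 1)) := by
  by_cases ha : a < g
  · have h : ∀ i ∈ range g, lollipopDist g a i = cycleDist g a i := fun i hi ↦ by
      rw [mem_range] at hi; simp only [lollipopDist, if_pos ha, if_pos hi]
    rw [sum_congr rfl h, sum_range_cycleDist_eq ha, Nat.sub_eq_zero_of_le (by omega), mul_zero,
      add_zero]
  · have h : ∀ i ∈ range g, lollipopDist g a i = cycleDist g (g - 1) i + (a - (g - 1)) :=
      fun i hi ↦ by
        rw [mem_range] at hi
        simp only [lollipopDist, if_neg ha, if_pos hi, cycleDist_comm g i]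
    rw [sum_congr rfl h, sum_add_distrib, sum_const, card_range, smul_eq_mul,
      sum_range_cycleDist_eq (by omega : g - 1 < g)]

theorem sum_range_lollipopDist_path_of_lt {g a : ℕ} (k : ℕ) (ha : a < g) :
    ∑ t ∈ range k, lollipopDist g a (g + t) =
      k * (cycleDist g a (g - 1) + 1) + ∑ t ∈ range k, t := by
  have h : ∀ t ∈ range k, lollipopDist g a (g + t) = (cycleDist g a (g - 1) + 1) + t :=
    fun t _ ↦ by simp only [lollipopDist, if_pos ha, if_neg (show ¬g + t < g by omega)]; omega
  rw [sum_congr rfl h, sum_add_distrib, sum_const, card_range, smul_eq_mul]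

theorem sum_range_lollipopDist_path_of_le {g a : ℕ} (k : ℕ) (ha : g ≤ a) :
    ∑ t ∈ range k, lollipopDist g a (g + t) = ∑ t ∈ range k, Nat.dist (a - g) t := by
  refine sum_congr rfl fun t _ ↦ ?_
  simp only [lollipopDist, if_neg (show ¬a < g by omega), if_neg (show ¬g + t < g by omega)]
  unfold Nat.dist; omega

theorem sum_range_lollipopDist_lt {g k a : ℕ} (hg : 3 ≤ g) (hk : 1 ≤ k)
    (ha : a < g + k - 1) :
    ∑ i ∈ range (g + k), lollipopDist g a i <
      ∑ i ∈ range (g + k), lollipopDist g (g + k - 1) i := by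
  rw [sum_range_add, sum_range_add, sum_range_lollipopDist_cycle (by omega),
    sum_range_lollipopDist_cycle (by omega),
    sum_range_lollipopDist_path_of_le (a := g + k - 1) k (by omega),
    show g + k - 1 - g = k - 1 by omega, sum_range_dist_pred, show g + k - 1 - (g - 1) = k by omega]
  by_cases hag : a < g
  · have hd : cycleDist g a (g - 1) + 1 < g := by unfold cycleDist Nat.dist; omega
    have : k * (cycleDist g a (g - 1) + 1) < g * k := by nlinarith
    rw [sum_range_lollipopDist_path_of_lt k hag, Nat.sub_eq_zero_of_le (by omega)]
    omega
  · have : g * (a - (g - 1)) < g * k := Nat.mul_lt_mul_of_pos_left (by omega) (by omega)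
    have := sum_range_dist_le (show a - g < k by omega)
    rw [sum_range_lollipopDist_path_of_le k (by omega)]
    omega

theorem vertexDistance_lollipop_s5 {n g : ℕ} (hgn : g ≤ n) (a : Fin n) :
    vertexDistance (lollipop n g) a = ∑ i ∈ range n, lollipopDist g a i := by
  rw [vertexDistance, ← Fin.sum_univ_eq_sum_range]
  exact sum_congr rfl fun b _ ↦ lollipop_dist hgn a b

/-- In `L_{n,n-k}` (with `k ≥ 1`, `n ≥ k+3`), the pendant vertex `n-1` has
strictly larger distance than every non-pendant vertex. -/
theorem stmt5 (n k : ℕ) (hk : 1 ≤ k) (hn : k + 3 ≤ n)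
    (v : Fin n) (hv : v ≠ ⟨n - 1, by omega⟩) :
    vertexDistance (lollipop n (n - k)) v <
      vertexDistance (lollipop n (n - k)) ⟨n - 1, by omega⟩ := by
  obtain ⟨g, rfl⟩ : ∃ g, n = g + k := ⟨n - k, by omega⟩
  have hv' : (v : ℕ) < g + k - 1 := by
    have : (v : ℕ) ≠ g + k - 1 := fun h ↦ hv (Fin.ext h)
    omega
  rw [Nat.add_sub_cancel, vertexDistance_lollipop_s5 (by omega), vertexDistance_lollipop_s5 (by omega)]
  exact sum_range_lollipopDist_lt (by omega) hk hv'
end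

section
/- Let G be a connected graph on n ≥ 5 vertices with exactly k ≥ 1 cut vertices, let B be a pendant block of G with |V(B)| = m ≥ 4 containing the cut vertex w, and let G' be the graph obtained from G by replacing B by the cycle C_m in such a way that w remains a cut vertex of G' lying on C_m. Then for every vertex v of G there exists a vertex v' of G' with D_{G'}(v') ≥ D_G(v); in particular, if v ∈ (V(G) \ V(B)) ∪ {w}, then D_{G'}(v) ≥ D_G(v). -/
open SimpleGraph

variable {V : Type*}

/-!
Every edge leaving the pendant block `B` leaves it at its cut vertex `w`: an end `x ≠ w` of such
an edge is not a cut vertex, so a path from the outside back to `B` avoiding `x` would enlarge `B`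
to a bigger set without cut vertices. Hence shortest paths between `B` and its outside run through
`w`, and no distance outside `B` gets shorter in `G'`. Inside `B` two counting bounds compare the
blocks: in a graph on `m` vertices without cut vertex, every distance layer around `v` except the
first and the last has at least two vertices, so `4 D(v) ≤ m²` and all distances are at most
`m / 2`; on `C_m` every vertex has `D = ⌊m² / 4⌋` and a vertex at distance `⌊m / 2⌋`. A vertex of
`B ∖ {w}` is dominated by the vertex of the cycle farthest from `w`.
-/

open SimpleGraph Finset

lemma Finset.sum_eq_sum_range_card_lt {ι : Type*} [Fintype ι] (f : ι → ℕ) {N : ℕ}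
    (hf : ∀ x, f x ≤ N) : ∑ x, f x = ∑ i ∈ range N, #{x | i < f x} := by
  simp only [card_filter]
  rw [Finset.sum_comm]
  refine sum_congr rfl fun x _ => ?_
  rw [← card_filter]
  convert (card_range (f x)).symm using 2
  ext i
  simp only [mem_filter, mem_range]
  have := hf x
  omega

lemma Finset.sum_range_two_mul_add_one (n : ℕ) : ∑ i ∈ range n, (2 * i + 1) = n ^ 2 := by
  induction n with
  | zero => simp
  | succ n ih => rw [sum_range_succ, ih]; ring

lemma Finset.sum_range_min_sub (m : ℕ) : ∑ k ∈ range m, min k (m - k) = m ^ 2 / 4 := by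
  induction m using Nat.twoStepInduction with
  | zero => simp
  | one => simp
  | more m ih _ =>
    rw [sum_range_succ', sum_range_succ]
    have hshift : ∀ k ∈ range m, min (k + 1) (m + 2 - (k + 1)) = min k (m - k) + 1 := by
      intro k hk
      have := mem_range.1 hk
      omega
    rw [sum_congr rfl hshift, sum_add_distrib, ih, sum_const, card_range, smul_eq_mul, mul_one]
    have : (m + 2) ^ 2 = m ^ 2 + 4 * (m + 1) := by ring
    omega

namespace SimpleGraph

lemma Reachable.dist_map_le {W : Type*} {G : SimpleGraph V} {H : SimpleGraph W} {u v : V}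
    (h : G.Reachable u v) (f : G →g H) : H.dist (f u) (f v) ≤ G.dist u v := by
  obtain ⟨p, hp⟩ := h.exists_walk_length_eq_dist
  exact hp ▸ p.length_map f ▸ dist_le (p.map f)

section Transmission

variable {G : SimpleGraph V}

lemma dist_le_dist_add_one_of_adj {u x y : V} (h : G.Adj x y) :
    G.dist u y ≤ G.dist u x + 1 := by
  rcases h.diff_dist_adj (u := u) with h | h | h <;> omega

lemma Walk.exists_mem_support_eq_of_le (f : V → ℕ) (hf : ∀ ⦃x y⦄, G.Adj x y → f y ≤ f x + 1)
    {a c : V} (p : G.Walk a c) {j : ℕ} (ha : f a ≤ j) (hc : j ≤ f c) :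
    ∃ s ∈ p.support, f s = j := by
  induction p with
  | nil => exact ⟨_, start_mem_support _, by omega⟩
  | @cons a x c h p ih =>
    by_cases hj : f a = j
    · exact ⟨a, start_mem_support _, hj⟩
    · obtain ⟨s, hs, hsj⟩ := ih (by have := hf h; omega) hc
      exact ⟨s, by simp [hs], hsj⟩

lemma exists_ne_dist_eq_of_lt_dist (hG : G.Connected)
    (hG₂ : ∀ x, (G.induce {x}ᶜ).Connected) {v z : V} {j : ℕ} (hj₀ : 0 < j)
    (hj : j < G.dist v z) : ∃ u₁ u₂, u₁ ≠ u₂ ∧ G.dist v u₁ = j ∧ G.dist v u₂ = j := by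
  obtain ⟨p⟩ := hG v z
  obtain ⟨u₁, -, hu₁⟩ := p.exists_mem_support_eq_of_le (G.dist v)
    (fun _ _ => dist_le_dist_add_one_of_adj) (by simp) hj.le
  have hv : v ≠ u₁ := by rintro rfl; simp at hu₁; omega
  have hz : z ≠ u₁ := by rintro rfl; omega
  obtain ⟨q⟩ := hG₂ u₁ ⟨v, hv⟩ ⟨z, hz⟩
  obtain ⟨u₂, -, hu₂⟩ := q.exists_mem_support_eq_of_le (fun t : ({u₁}ᶜ : Set V) => G.dist v t)
    (fun _ _ h => dist_le_dist_add_one_of_adj (induce_adj.1 h)) (by simp) hj.le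
  exact ⟨u₁, u₂, fun h => u₂.2 h.symm, hu₁, hu₂⟩

variable [Fintype V]

lemma two_mul_add_one_le_card_dist_le (hG : G.Connected)
    (hG₂ : ∀ x, (G.induce {x}ᶜ).Connected) (v : V) {z : V} {i : ℕ} (hi : i < G.dist v z) :
    2 * i + 1 ≤ #{u | G.dist v u ≤ i} := by
  classical
  induction i with
  | zero => exact card_pos.2 ⟨v, mem_filter.2 ⟨mem_univ _, by simp⟩⟩
  | succ i ih =>
    obtain ⟨u₁, u₂, hne, hu₁, hu₂⟩ := exists_ne_dist_eq_of_lt_dist hG hG₂ i.succ_pos hi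
    have hsplit : (univ.filter fun u => G.dist v u ≤ i + 1) =
        (univ.filter fun u => G.dist v u ≤ i) ∪ (univ.filter fun u => G.dist v u = i + 1) := by
      ext u; simp only [mem_filter, mem_univ, true_and, mem_union]; omega
    have htwo : 1 < #{u | G.dist v u = i + 1} :=
      one_lt_card.2 ⟨u₁, by simpa using hu₁, u₂, by simpa using hu₂, hne⟩
    rw [hsplit, card_union_of_disjoint (disjoint_filter.2 fun _ _ _ => by omega)]
    have := ih (by omega)
    omega

lemma two_mul_dist_le_card (hG : G.Connected) (hG₂ : ∀ x, (G.induce {x}ᶜ).Connected)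
    (v u : V) : 2 * G.dist v u ≤ Fintype.card V := by
  rcases hd : G.dist v u with _ | e
  · simp
  · have hball := two_mul_add_one_le_card_dist_le hG hG₂ v (z := u) (i := e) (by omega)
    have : #{x | G.dist v x ≤ e} < Fintype.card V :=
      card_lt_univ_of_notMem (x := u) (by simp [hd])
    omega

-- With `e` the largest distance from `v`, `∑ u, d(v, u) = ∑ i < e, #{u | i < d(v, u)}` and each
-- term is at most `card V - (2i + 1)`, so the sum is at most `e (card V - e)`.
lemma four_mul_sum_dist_le (hG : G.Connected) (hG₂ : ∀ x, (G.induce {x}ᶜ).Connected) (v : V) :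
    4 * ∑ u, G.dist v u ≤ Fintype.card V ^ 2 := by
  have := hG.nonempty
  obtain ⟨z, hz⟩ := Finite.exists_max (G.dist v)
  have hlayer : ∀ i ∈ range (G.dist v z),
      #{u | i < G.dist v u} + (2 * i + 1) ≤ Fintype.card V := by
    intro i hi
    have hball := two_mul_add_one_le_card_dist_le hG hG₂ v (mem_range.1 hi)
    have hcompl := card_filter_add_card_filter_not (s := univ) (fun u => G.dist v u ≤ i)
    simp only [not_le, card_univ] at hcompl
    omega
  have hsum := sum_le_sum hlayer
  rw [sum_add_distrib, sum_range_two_mul_add_one, ← sum_eq_sum_range_card_lt _ hz,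
    sum_const, card_range, smul_eq_mul] at hsum
  have := two_mul_dist_le_card hG hG₂ v z
  nlinarith

end Transmission

def IsAttachedAt (G : SimpleGraph V) (S : Set V) (w : V) : Prop :=
  ∀ ⦃a b⦄, G.Adj a b → a ∈ S → b ∉ S → a = w

namespace IsAttachedAt

variable {G : SimpleGraph V} {S : Set V} {w : V}

lemma compl_insert (h : G.IsAttachedAt S w) : G.IsAttachedAt (insert w Sᶜ) w := by
  rintro a b hab (rfl | ha) hb
  · rfl
  · simp only [Set.mem_insert_iff, Set.mem_compl_iff, not_or, not_not] at hb
    exact absurd (h hab.symm hb.2 ha) hb.1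

lemma exists_walk_induce (h : G.IsAttachedAt S w) (hw : w ∈ S) {a b : V} (p : G.Walk a b)
    (hb : b ∈ S) :
    (∀ ha : a ∈ S, ∃ q : (G.induce S).Walk ⟨a, ha⟩ ⟨b, hb⟩, q.length ≤ p.length) ∧
      (a ∉ S → ∃ q : (G.induce S).Walk ⟨w, hw⟩ ⟨b, hb⟩, G.dist a w + q.length ≤ p.length) := by
  induction p with
  | nil => exact ⟨fun _ => ⟨.nil, le_rfl⟩, fun ha => absurd hb ha⟩
  | @cons a x b hax p ih =>
    obtain ⟨ih₁, ih₂⟩ := ih hb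
    by_cases hx : x ∈ S
    · obtain ⟨q, hq⟩ := ih₁ hx
      refine ⟨fun ha => ⟨.cons (show (G.induce S).Adj ⟨a, ha⟩ ⟨x, hx⟩ from hax) q,
        by simpa using hq⟩, fun ha => ?_⟩
      obtain rfl := h hax.symm hx ha
      exact ⟨q, by simp [dist_eq_one_iff_adj.2 hax]; omega⟩
    · obtain ⟨q, hq⟩ := ih₂ hx
      refine ⟨fun ha => ?_, fun _ => ⟨q, ?_⟩⟩
      · obtain rfl := h hax ha hx
        exact ⟨q, by simp; omega⟩
      · have := dist_le_dist_add_one_of_adj (u := w) hax.symm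
        rw [dist_comm, dist_comm (u := w)] at this
        simp only [Walk.length_cons]
        omega

lemma induce_connected (h : G.IsAttachedAt S w) (hw : w ∈ S) (hG : G.Connected) :
    (G.induce S).Connected := by
  rw [connected_iff_exists_forall_reachable]
  refine ⟨⟨w, hw⟩, fun ⟨b, hb⟩ => ?_⟩
  obtain ⟨q, -⟩ := (h.exists_walk_induce hw (hG w b).some hb).1 hw
  exact q.reachable

lemma dist_induce_le (h : G.IsAttachedAt S w) (hw : w ∈ S) (hG : G.Connected) {a b : V}
    (ha : a ∈ S) (hb : b ∈ S) : (G.induce S).dist ⟨a, ha⟩ ⟨b, hb⟩ ≤ G.dist a b := by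
  obtain ⟨p, hp⟩ := hG.exists_walk_length_eq_dist a b
  obtain ⟨q, hq⟩ := (h.exists_walk_induce hw p hb).1 ha
  exact (dist_le q).trans (hp ▸ hq)

lemma dist_add_dist_induce_le (h : G.IsAttachedAt S w) (hw : w ∈ S) (hG : G.Connected)
    {a b : V} (ha : a ∈ insert w Sᶜ) (hb : b ∈ S) :
    G.dist a w + (G.induce S).dist ⟨w, hw⟩ ⟨b, hb⟩ ≤ G.dist a b := by
  rcases ha with rfl | ha
  · simpa using h.dist_induce_le hw hG hw hb
  obtain ⟨p, hp⟩ := hG.exists_walk_length_eq_dist a b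
  obtain ⟨q, hq⟩ := (h.exists_walk_induce hw p hb).2 ha
  have := dist_le q
  omega

end IsAttachedAt

variable {G : SimpleGraph V}

lemma Walk.IsPath.exists_walk_avoiding_to_start_or_end [DecidableEq V] {u v : V} {p : G.Walk u v}
    (hp : p.IsPath) {a r : V} (ha : a ∈ p.support) (hr : r ≠ a) :
    (∃ q : G.Walk a u, ∀ s ∈ q.support, s ∈ p.support ∧ s ≠ r) ∨
      ∃ q : G.Walk a v, ∀ s ∈ q.support, s ∈ p.support ∧ s ≠ r := by
  by_cases hrt : r ∈ (p.takeUntil a ha).support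
  · right
    refine ⟨p.dropUntil a ha, fun s hs => ⟨p.support_dropUntil_subset_support ha hs, ?_⟩⟩
    rintro rfl
    have hnd := hp.support_nodup
    rw [← p.take_spec ha, Walk.support_append] at hnd
    rw [← Walk.cons_tail_support, List.mem_cons] at hs
    exact List.disjoint_of_nodup_append hnd hrt (hs.resolve_left hr)
  · left
    refine ⟨(p.takeUntil a ha).reverse, fun s hs => ?_⟩
    rw [Walk.support_reverse, List.mem_reverse] at hs
    exact ⟨p.support_takeUntil_subset_support ha hs, fun h => hrt (h ▸ hs)⟩

def induceInduceIso (G : SimpleGraph V) (S : Set V) (v : S) :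
    (G.induce S).induce ({v}ᶜ : Set S) ≃g G.induce (S \ {(v : V)}) where
  toFun a := ⟨a.1.1, a.1.2, fun h => a.2 (Subtype.ext h)⟩
  invFun a := ⟨⟨a.1, a.2.1⟩, fun h => a.2.2 (congrArg Subtype.val h)⟩
  map_rel_iff' := Iff.rfl

lemma not_isCutVertex_induce_iff {S : Set V} {v : S} :
    ¬ IsCutVertex (G.induce S) v ↔ (G.induce (S \ {(v : V)})).Connected :=
  not_not.trans (induceInduceIso G S v).connected_iff

lemma induce_union_support_diff_connected [DecidableEq V] {B : Set V}
    (hB : ∀ r, (G.induce (B \ {r})).Connected) {x b : V} {p : G.Walk x b} (hp : p.IsPath)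
    (hx : x ∈ B) (hb : b ∈ B) (r : V) :
    (G.induce ((B ∪ {s | s ∈ p.support}) \ {r})).Connected := by
  have hsub : B \ {r} ⊆ (B ∪ {s | s ∈ p.support}) \ {r} :=
    Set.sdiff_subset_sdiff_left Set.subset_union_left
  obtain ⟨⟨h, hh⟩⟩ := (hB r).nonempty
  have toHub : ∀ a (ha : a ∈ B \ {r}),
      (G.induce ((B ∪ {s | s ∈ p.support}) \ {r})).Reachable ⟨h, hsub hh⟩ ⟨a, hsub ha⟩ :=
    fun a ha => ((hB r) ⟨h, hh⟩ ⟨a, ha⟩).map (induceHomOfLE G hsub).toHom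
  rw [connected_iff_exists_forall_reachable]
  refine ⟨⟨h, hsub hh⟩, ?_⟩
  rintro ⟨a, ha | ha, har⟩
  · exact toHub a ⟨ha, har⟩
  · have hend : ∀ c ∈ B, ∀ q : G.Walk a c, (∀ s ∈ q.support, s ∈ p.support ∧ s ≠ r) →
        (G.induce ((B ∪ {s | s ∈ p.support}) \ {r})).Reachable ⟨h, hsub hh⟩ ⟨a, Or.inr ha, har⟩ :=
      fun c hc q hq =>
        (toHub c ⟨hc, (hq c q.end_mem_support).2⟩).trans
          (q.induce ((B ∪ {s | s ∈ p.support}) \ {r})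
            fun s hs => ⟨Or.inr (hq s hs).1, (hq s hs).2⟩).reverse.reachable
    rcases hp.exists_walk_avoiding_to_start_or_end ha (Ne.symm har) with ⟨q, hq⟩ | ⟨q, hq⟩
    · exact hend x hx q hq
    · exact hend b hb q hq

end SimpleGraph

lemma IsBlock.induce_diff_singleton_connected {G : SimpleGraph V} {B : Set V} (hB : IsBlock G B)
    (r : V) : (G.induce (B \ {r})).Connected := by
  by_cases hr : r ∈ B
  · exact not_isCutVertex_induce_iff.1 (hB.2.2.1 ⟨r, hr⟩)
  · rw [Set.sdiff_singleton_eq_self hr]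
    exact hB.2.1

theorem IsBlock.isCutVertex_of_adj_s6 {G : SimpleGraph V} {B : Set V} (hB : IsBlock G B)
    {x y : V} (hx : x ∈ B) (hy : y ∉ B) (hxy : G.Adj x y) : IsCutVertex G x := by
  classical
  intro hGx
  obtain ⟨b, hb, hbx⟩ := Set.exists_ne_of_one_lt_ncard hB.1 x
  obtain ⟨p, hp⟩ := (hGx ⟨y, fun h => hy (h ▸ hx)⟩ ⟨b, hbx⟩).exists_isPath
  set P := p.map (Embedding.induce _).toHom
  have hxP : x ∉ P.support := by
    rw [Walk.support_map, List.mem_map]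
    rintro ⟨t, -, ht⟩
    exact t.2 ht
  have hE : (Walk.cons hxy P).IsPath :=
    (hp.map Subtype.val_injective).cons hxP
  set C := B ∪ {s | s ∈ (Walk.cons hxy P).support}
  have hC : (G.induce C).Connected :=
    induce_union_connected hB.2.1.preconnected
      (Walk.cons hxy P).connected_induce_support.preconnected ⟨x, hx, Walk.start_mem_support _⟩
  have hCB := hB.2.2.2 C Set.subset_union_left hC fun v => not_isCutVertex_induce_iff.2
    (induce_union_support_diff_connected hB.induce_diff_singleton_connected hE hx hb v)
  exact hy (hCB ▸ Or.inr (List.mem_cons_of_mem x P.start_mem_support))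

theorem IsPendantBlock.isAttachedAt {G : SimpleGraph V} {B : Set V} (hB : IsPendantBlock G B)
    {w : V} (hw : w ∈ B) (hwcut : IsCutVertex G w) : G.IsAttachedAt B w := by
  intro a b hab ha hb
  obtain ⟨c, hc⟩ := Set.ncard_eq_one.1 hB.2
  have hac : a ∈ ({c} : Set V) := hc ▸ ⟨ha, hB.1.isCutVertex_of_adj_s6 ha hb hab⟩
  have hwc : w ∈ ({c} : Set V) := hc ▸ ⟨hw, hwcut⟩
  exact hac.trans hwc.symm

section Cycle

namespace Fin
variable {m : ℕ}

def circularNorm (x : Fin m) : ℕ := min x.val (m - x.val)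

lemma val_sub_add_eq (a b : Fin m) : (b - a).val + a = b ∨ (b - a).val + a = b + m := by
  rcases le_or_gt a b with h | h
  · left; rw [coe_sub_iff_le.2 h]; omega
  · right; rw [coe_sub_iff_lt.2 h]; omega

end Fin
open Fin

variable {m : ℕ}

lemma cycleG_adj {a b : Fin m} : (cycleG m).Adj a b ↔ a ≠ b ∧
    ((a : ℕ) + 1 = b ∨ (b : ℕ) + 1 = a ∨ ((a : ℕ) = 0 ∧ (b : ℕ) = m - 1) ∨
      ((b : ℕ) = 0 ∧ (a : ℕ) = m - 1)) := by
  simp only [cycleG, lollipop, fromRel_adj]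
  tauto

lemma circularNorm_sub_le_of_adj (c : Fin m) {a x : Fin m} (h : (cycleG m).Adj a x) :
    circularNorm (c - a) ≤ circularNorm (c - x) + 1 := by
  unfold circularNorm
  have := a.isLt; have := x.isLt; have := c.isLt; have := (c - a).isLt; have := (c - x).isLt
  rw [cycleG_adj, ne_eq, Fin.ext_iff] at h
  rcases val_sub_add_eq a c with h₁ | h₁ <;> rcases val_sub_add_eq x c with h₂ | h₂ <;> omega

variable [NeZero m]

lemma cycleG_connected : (cycleG m).Connected := by
  obtain ⟨n, rfl⟩ := Nat.exists_eq_succ_of_ne_zero (NeZero.ne m)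
  refine (pathGraph_connected n).mono fun u v h => ?_
  rw [pathGraph_adj] at h
  rw [cycleG_adj, ne_eq, Fin.ext_iff]
  omega

lemma circularNorm_sub_le_dist (a b : Fin m) : circularNorm (b - a) ≤ (cycleG m).dist a b := by
  obtain ⟨p, hp⟩ := cycleG_connected.exists_walk_length_eq_dist a b
  rw [← hp]
  clear hp
  induction p with
  | nil => simp [circularNorm]
  | cons h p ih =>
    rw [Walk.length_cons]
    exact (circularNorm_sub_le_of_adj _ h).trans (by omega)

lemma sq_div_four_le_sum_dist_cycleG (a : Fin m) : m ^ 2 / 4 ≤ ∑ u, (cycleG m).dist a u :=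
  calc m ^ 2 / 4 = ∑ x : Fin m, circularNorm x :=
        (sum_range_min_sub m).symm.trans (sum_univ_eq_sum_range (fun k => min k (m - k)) m).symm
    _ = ∑ u, circularNorm (u - a) := ((Equiv.subRight a).sum_comp circularNorm).symm
    _ ≤ ∑ u, (cycleG m).dist a u := sum_le_sum fun u _ => circularNorm_sub_le_dist a u

lemma exists_half_le_dist_cycleG (a : Fin m) : ∃ b, m / 2 ≤ (cycleG m).dist a b := by
  have hm := Nat.pos_of_neZero m
  refine ⟨a + ⟨m / 2, by omega⟩, le_trans ?_ (circularNorm_sub_le_dist _ _)⟩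
  rw [add_sub_cancel_left, circularNorm]
  simp only
  omega

variable {W : Type*} {H : SimpleGraph W}

lemma sq_div_four_le_sum_dist_of_iso [Fintype W] (e : H ≃g cycleG m) (a : W) :
    m ^ 2 / 4 ≤ ∑ u, H.dist a u := by
  have hH := e.connected_iff.2 cycleG_connected
  calc m ^ 2 / 4 ≤ ∑ x, (cycleG m).dist (e a) x := sq_div_four_le_sum_dist_cycleG _
    _ = ∑ u, (cycleG m).dist (e a) (e u) := (e.toEquiv.sum_comp _).symm
    _ ≤ ∑ u, H.dist a u := sum_le_sum fun u _ => (hH a u).dist_map_le e.toHom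

lemma exists_half_le_dist_of_iso (e : H ≃g cycleG m) (a : W) : ∃ b, m / 2 ≤ H.dist a b := by
  have hH := e.connected_iff.2 cycleG_connected
  obtain ⟨b, hb⟩ := exists_half_le_dist_cycleG (e a)
  refine ⟨e.symm b, hb.trans ?_⟩
  simpa using (hH a (e.symm b)).dist_map_le e.toHom

end Cycle

lemma vertexDistance_le_of_le [Fintype V] {G G' : SimpleGraph V} {B : Set V}
    [DecidablePred (· ∈ B)] {v v' : V}
    (hin : ∑ u : B, G.dist v u ≤ ∑ u : B, G'.dist v' u)
    (hout : ∀ u ∉ B, G.dist v u ≤ G'.dist v' u) : vertexDistance G v ≤ vertexDistance G' v' := by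
  rw [vertexDistance, vertexDistance, ← Fintype.sum_subtype_add_sum_subtype (· ∈ B),
    ← Fintype.sum_subtype_add_sum_subtype (· ∈ B)]
  exact add_le_add hin (sum_le_sum fun u _ => hout u u.2)

structure IsReplacementAt (G G' : SimpleGraph V) (B : Set V) (w : V) : Prop where
  connected : G.Connected
  isAttachedAt : G.IsAttachedAt B w
  mem : w ∈ B
  adj_iff : ∀ u v, (u ∉ B ∨ v ∉ B) → (G'.Adj u v ↔ G.Adj u v)
  connected_induce : (G.induce B).Connected
  connected_induce' : (G'.induce B).Connected

namespace IsReplacementAt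

variable {G G' : SimpleGraph V} {B : Set V} {w : V}

lemma isAttachedAt' (h : IsReplacementAt G G' B w) : G'.IsAttachedAt B w :=
  fun _ _ hab ha hb => h.isAttachedAt ((h.adj_iff _ _ (Or.inr hb)).1 hab) ha hb

lemma induce_insert_compl_eq (h : IsReplacementAt G G' B w) :
    G'.induce (insert w Bᶜ) = G.induce (insert w Bᶜ) := by
  ext ⟨u, hu⟩ ⟨v, hv⟩
  simp only [induce_adj]
  by_cases huv : u ∉ B ∨ v ∉ B
  · exact h.adj_iff u v huv
  · push Not at huv
    obtain rfl : u = w := hu.resolve_right (· huv.1)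
    obtain rfl : v = u := hv.resolve_right (· huv.2)
    simp

lemma connected_induce_insert_compl (h : IsReplacementAt G G' B w) :
    (G.induce (insert w Bᶜ)).Connected :=
  h.isAttachedAt.compl_insert.induce_connected (Set.mem_insert w _) h.connected

lemma connected' (h : IsReplacementAt G G' B w) : G'.Connected := by
  have hS := h.connected_induce_insert_compl
  rw [← h.induce_insert_compl_eq] at hS
  rw [connected_iff_exists_forall_reachable]
  refine ⟨w, fun a => ?_⟩
  by_cases ha : a ∈ B
  · exact (h.connected_induce' ⟨w, h.mem⟩ ⟨a, ha⟩).map (Embedding.induce B).toHom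
  · exact (hS ⟨w, Set.mem_insert w _⟩ ⟨a, Or.inr ha⟩).map (Embedding.induce _).toHom

lemma dist_le_dist (h : IsReplacementAt G G' B w) {u v : V} (hu : u ∈ insert w Bᶜ)
    (hv : v ∈ insert w Bᶜ) : G.dist u v ≤ G'.dist u v :=
  calc G.dist u v ≤ (G.induce (insert w Bᶜ)).dist ⟨u, hu⟩ ⟨v, hv⟩ :=
        (h.connected_induce_insert_compl ⟨u, hu⟩ ⟨v, hv⟩).dist_map_le (Embedding.induce _).toHom
    _ = (G'.induce (insert w Bᶜ)).dist ⟨u, hu⟩ ⟨v, hv⟩ := by rw [h.induce_insert_compl_eq]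
    _ ≤ G'.dist u v :=
        h.isAttachedAt'.compl_insert.dist_induce_le (Set.mem_insert w _) h.connected' hu hv

lemma dist_add_dist_induce_le (h : IsReplacementAt G G' B w) {v u : V}
    (hv : v ∈ insert w Bᶜ) (hu : u ∈ B) :
    G.dist v w + (G'.induce B).dist ⟨w, h.mem⟩ ⟨u, hu⟩ ≤ G'.dist v u :=
  (Nat.add_le_add_right (h.dist_le_dist hv (Set.mem_insert w _)) _).trans
    (h.isAttachedAt'.dist_add_dist_induce_le h.mem h.connected' hv hu)

variable [Fintype V] [DecidablePred (· ∈ B)]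

lemma vertexDistance_le_of_mem_insert_compl (h : IsReplacementAt G G' B w)
    (hsum : ∑ u : B, (G.induce B).dist ⟨w, h.mem⟩ u ≤ ∑ u : B, (G'.induce B).dist ⟨w, h.mem⟩ u)
    {v : V} (hv : v ∈ insert w Bᶜ) : vertexDistance G v ≤ vertexDistance G' v := by
  refine vertexDistance_le_of_le (B := B) ?_ fun u hu => h.dist_le_dist hv (Or.inr hu)
  calc ∑ u : B, G.dist v u ≤ ∑ u : B, (G.dist v w + (G.induce B).dist ⟨w, h.mem⟩ u) :=
        sum_le_sum fun u _ => (h.connected.dist_triangle (v := w)).trans <| Nat.add_le_add_left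
          ((h.connected_induce ⟨w, h.mem⟩ u).dist_map_le (Embedding.induce B).toHom) _
    _ ≤ ∑ u : B, (G.dist v w + (G'.induce B).dist ⟨w, h.mem⟩ u) := by
        rw [sum_add_distrib, sum_add_distrib]
        exact Nat.add_le_add_left hsum _
    _ ≤ ∑ u : B, G'.dist v u := sum_le_sum fun u _ => h.dist_add_dist_induce_le hv u.2

lemma vertexDistance_le_of_mem (h : IsReplacementAt G G' B w)
    (hsum : ∀ a b : B, ∑ u, (G.induce B).dist a u ≤ ∑ u, (G'.induce B).dist b u) {b : B}
    (hb : ∀ a : B, (G.induce B).dist a ⟨w, h.mem⟩ ≤ (G'.induce B).dist ⟨w, h.mem⟩ b)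
    {v : V} (hv : v ∈ B) : vertexDistance G v ≤ vertexDistance G' b := by
  refine vertexDistance_le_of_le (B := B) ?_ fun u hu => ?_
  · calc ∑ u : B, G.dist v u ≤ ∑ u : B, (G.induce B).dist ⟨v, hv⟩ u :=
          sum_le_sum fun u _ =>
            (h.connected_induce ⟨v, hv⟩ u).dist_map_le (Embedding.induce B).toHom
      _ ≤ ∑ u : B, (G'.induce B).dist b u := hsum _ _
      _ ≤ ∑ u : B, G'.dist b u :=
          sum_le_sum fun u _ => h.isAttachedAt'.dist_induce_le h.mem h.connected' b.2 u.2
  · calc G.dist v u ≤ G.dist v w + G.dist w u := h.connected.dist_triangle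
      _ ≤ (G'.induce B).dist ⟨w, h.mem⟩ b + G.dist u w :=
          Nat.add_le_add (((h.connected_induce ⟨v, hv⟩ ⟨w, h.mem⟩).dist_map_le
            (Embedding.induce B).toHom).trans (hb ⟨v, hv⟩)) dist_comm.le
      _ ≤ G'.dist u b := by
          rw [add_comm]
          exact h.dist_add_dist_induce_le (Or.inr hu) b.2
      _ = G'.dist b u := dist_comm

end IsReplacementAt

theorem stmt6_general (n m : ℕ)
    (G G' : SimpleGraph (Fin n)) (hG : G.Connected)
    (B : Set (Fin n)) (hB : IsPendantBlock G B) (hm : B.ncard = m)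
    (w : Fin n) (hw : w ∈ B) (hwcut : IsCutVertex G w)
    (houtside : ∀ u v : Fin n, (u ∉ B ∨ v ∉ B) → (G'.Adj u v ↔ G.Adj u v))
    (hinside : Nonempty ((G'.induce B) ≃g cycleG m)) :
    (∀ v : Fin n, ∃ v' : Fin n, vertexDistance G v ≤ vertexDistance G' v') ∧
    (∀ v : Fin n, (v ∉ B ∨ v = w) →
      vertexDistance G v ≤ vertexDistance G' v) := by
  classical
  obtain ⟨e⟩ := hinside
  have : NeZero m := ⟨(e ⟨w, hw⟩).pos.ne'⟩
  have hGB : (G.induce B).Connected := hB.1.2.1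
  have hGB₂ : ∀ x, ((G.induce B).induce {x}ᶜ).Connected := fun x => not_not.1 (hB.1.2.2.1 x)
  have h : IsReplacementAt G G' B w := ⟨hG, hB.isAttachedAt hw hwcut, hw, houtside, hGB,
    e.connected_iff.2 cycleG_connected⟩
  have hcard : Fintype.card B = m := by rw [← hm, Set.ncard_eq_toFinset_card', Set.toFinset_card]
  have hsum : ∀ a b : B, ∑ u, (G.induce B).dist a u ≤ ∑ u, (G'.induce B).dist b u := by
    intro a b
    have := four_mul_sum_dist_le hGB hGB₂ a
    rw [hcard] at this
    exact ((Nat.le_div_iff_mul_le four_pos).2 (by linarith)).trans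
      (sq_div_four_le_sum_dist_of_iso e b)
  obtain ⟨b, hb⟩ := exists_half_le_dist_of_iso e ⟨w, hw⟩
  have hecc : ∀ a : B, (G.induce B).dist a ⟨w, hw⟩ ≤ (G'.induce B).dist ⟨w, hw⟩ b := by
    intro a
    have := two_mul_dist_le_card hGB hGB₂ a ⟨w, hw⟩
    omega
  have hself : ∀ v, (v ∉ B ∨ v = w) → vertexDistance G v ≤ vertexDistance G' v :=
    fun v hv => h.vertexDistance_le_of_mem_insert_compl (hsum _ _) hv.symm
  refine ⟨fun v => ?_, hself⟩
  by_cases hv : v ∈ B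
  · exact ⟨b, h.vertexDistance_le_of_mem hsum hecc hv⟩
  · exact ⟨v, hself v (Or.inl hv)⟩

/-- Replacing a pendant block `B` (of size `m ≥ 4`, with cut vertex `w`) by the
cycle `C_m`, keeping `w` a cut vertex, does not decrease vertex distances:
every vertex of `G` is dominated by some vertex of `G'`, and vertices outside
`B ∖ {w}` are dominated by themselves. -/
theorem stmt6 (n k m : ℕ) (hn : 5 ≤ n) (hk : 1 ≤ k)
    (G G' : SimpleGraph (Fin n)) (hG : G.Connected)
    (hcut : cutVertexCount G = k)
    (B : Set (Fin n)) (hB : IsPendantBlock G B) (hm : B.ncard = m) (hm4 : 4 ≤ m)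
    (w : Fin n) (hw : w ∈ B) (hwcut : IsCutVertex G w)
    (houtside : ∀ u v : Fin n, (u ∉ B ∨ v ∉ B) → (G'.Adj u v ↔ G.Adj u v))
    (hinside : Nonempty ((G'.induce B) ≃g cycleG m))
    (hw' : IsCutVertex G' w) :
    (∀ v : Fin n, ∃ v' : Fin n, vertexDistance G v ≤ vertexDistance G' v') ∧
    (∀ v : Fin n, (v ∉ B ∨ v = w) →
      vertexDistance G v ≤ vertexDistance G' v) :=
  stmt6_general n m G G' hG B hB hm w hw hwcut houtside hinside
end

section
/- Let m₁, m₂ ≥ 4 be integers and set n = m₁ + m₂. Then W(C_{m₁,m₂}^n) ≤ W(L_{n,n−2}), and equality holds if and only if m₁ = m₂ = 4. -/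
open SimpleGraph

variable {V : Type*}

section WienerProof
set_option maxHeartbeats 2000000

open Finset

variable {m₁ m₂ g : ℕ}

/-! ### arithmetic distance functions -/

def ddist (u v : ℕ) : ℕ := (u - v) + (v - u)

def cyc (m u v : ℕ) : ℕ := min (ddist u v) (m - ddist u v)

lemma cyc_comm (m u v : ℕ) : cyc m u v = cyc m v u := by simp only [cyc, ddist]; omega

lemma cyc_self (m u : ℕ) : cyc m u u = 0 := by simp only [cyc, ddist]; omega

lemma cyc_eq_zero (m u v : ℕ) (hu : u < m) (hv : v < m) (h : cyc m u v = 0) : u = v := by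
  simp only [cyc, ddist] at h; omega

lemma cycstep (m u v : ℕ) (hu : u < m) (hv : v < m) (hpos : 0 < cyc m u v) :
    (u+1 < m ∧ cyc m (u+1) v < cyc m u v) ∨
    (0 < u ∧ cyc m (u-1) v < cyc m u v) ∨
    (u = 0 ∧ cyc m (m-1) v < cyc m u v) ∨
    (u = m-1 ∧ cyc m 0 v < cyc m u v) := by
  rcases lt_trichotomy u v with h | h | h
  · rcases le_or_gt (2*(v-u)) m with h2 | h2
    · exact Or.inl ⟨by omega, by simp only [cyc, ddist]; omega⟩
    · rcases Nat.eq_zero_or_pos u with rfl | hu0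
      · exact Or.inr (Or.inr (Or.inl ⟨rfl, by simp only [cyc, ddist]; omega⟩))
      · exact Or.inr (Or.inl ⟨hu0, by simp only [cyc, ddist]; omega⟩)
  · subst h; simp only [cyc, ddist] at hpos; omega
  · rcases le_or_gt (2*(u-v)) m with h2 | h2
    · exact Or.inr (Or.inl ⟨by omega, by simp only [cyc, ddist]; omega⟩)
    · by_cases hm : u = m - 1
      · exact Or.inr (Or.inr (Or.inr ⟨hm, by subst hm; simp only [cyc, ddist]; omega⟩))
      · exact Or.inl ⟨by omega, by simp only [cyc, ddist]; omega⟩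

/-- edge relation of the cycle `0,…,m-1`. -/
def edgeC (m x y : ℕ) : Prop :=
  x+1 = y ∨ y+1 = x ∨ (x = 0 ∧ y = m-1) ∨ (y = 0 ∧ x = m-1)

lemma cyclipL (m t x y : ℕ) (ht : t < m) (hx : x < m) (hy : y < m)
    (h : edgeC m x y) : cyc m t y ≤ cyc m t x + 1 := by
  rcases h with h | h | h | h <;> simp only [cyc, ddist] <;> omega

lemma cyclipR (m t x y : ℕ) (ht : t < m) (hx : x < m) (hy : y < m)
    (h : edgeC m x y) : cyc m y t ≤ cyc m x t + 1 := by
  rcases h with h | h | h | h <;> simp only [cyc, ddist] <;> omega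

/-! ### the dumbbell distance function -/

def DDf (m₁ m₂ u v : ℕ) : ℕ :=
  if u < m₁ then
    if v < m₁ then cyc m₁ u v
    else cyc m₁ u (m₁-1) + 1 + cyc m₂ (v - m₁) 0
  else
    if v < m₁ then cyc m₁ v (m₁-1) + 1 + cyc m₂ (u - m₁) 0
    else cyc m₂ (u-m₁) (v-m₁)


lemma DD_AA {u v : ℕ} (h1 : u < m₁) (h2 : v < m₁) : DDf m₁ m₂ u v = cyc m₁ u v := by
  rw [DDf, if_pos h1, if_pos h2]
lemma DD_AB {u v : ℕ} (h1 : u < m₁) (h2 : ¬ v < m₁) :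
    DDf m₁ m₂ u v = cyc m₁ u (m₁-1) + 1 + cyc m₂ (v - m₁) 0 := by
  rw [DDf, if_pos h1, if_neg h2]
lemma DD_BA {u v : ℕ} (h1 : ¬ u < m₁) (h2 : v < m₁) :
    DDf m₁ m₂ u v = cyc m₁ v (m₁-1) + 1 + cyc m₂ (u - m₁) 0 := by
  rw [DDf, if_neg h1, if_pos h2]
lemma DD_BB {u v : ℕ} (h1 : ¬ u < m₁) (h2 : ¬ v < m₁) :
    DDf m₁ m₂ u v = cyc m₂ (u-m₁) (v-m₁) := by
  rw [DDf, if_neg h1, if_neg h2]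

lemma DD_self (u : ℕ) : DDf m₁ m₂ u u = 0 := by
  by_cases h : u < m₁
  · rw [DD_AA h h, cyc_self]
  · rw [DD_BB h h, cyc_self]

lemma DD_zero (h₁ : 4 ≤ m₁) (h₂ : 4 ≤ m₂) {u v : ℕ} (hu : u < m₁+m₂) (hv : v < m₁+m₂)
    (h : DDf m₁ m₂ u v = 0) : u = v := by
  by_cases h1 : u < m₁ <;> by_cases h2 : v < m₁
  · rw [DD_AA h1 h2] at h; exact cyc_eq_zero _ _ _ h1 h2 h
  · rw [DD_AB h1 h2] at h; omega
  · rw [DD_BA h1 h2] at h; omega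
  · rw [DD_BB h1 h2] at h
    have := cyc_eq_zero m₂ (u-m₁) (v-m₁) (by omega) (by omega) h; omega

/-- edge relation of the dumbbell (arithmetic form). -/
def edgeD (m₁ m₂ x y : ℕ) : Prop :=
  x+1 = y ∨ y+1 = x ∨ (x = 0 ∧ y = m₁-1) ∨ (y = 0 ∧ x = m₁-1) ∨
    (x = m₁ ∧ y = m₁+m₂-1) ∨ (y = m₁ ∧ x = m₁+m₂-1)

lemma DDstep (h₁ : 4 ≤ m₁) (h₂ : 4 ≤ m₂) {u v : ℕ} (hu : u < m₁+m₂) (hv : v < m₁+m₂)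
    (hpos : 0 < DDf m₁ m₂ u v) :
    ∃ w, w < m₁+m₂ ∧ w ≠ u ∧ edgeD m₁ m₂ u w ∧ DDf m₁ m₂ w v < DDf m₁ m₂ u v := by
  by_cases h1 : u < m₁
  · by_cases h2 : v < m₁
    · rw [DD_AA h1 h2] at hpos
      rcases cycstep m₁ u v h1 h2 hpos with ⟨ha, hb⟩ | ⟨ha, hb⟩ | ⟨ha, hb⟩ | ⟨ha, hb⟩
      · exact ⟨u+1, by omega, by omega, Or.inl rfl,
          by rw [DD_AA ha h2, DD_AA h1 h2]; exact hb⟩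
      · exact ⟨u-1, by omega, by omega, Or.inr (Or.inl (by omega)),
          by rw [DD_AA (by omega) h2, DD_AA h1 h2]; exact hb⟩
      · exact ⟨m₁-1, by omega, by omega, Or.inr (Or.inr (Or.inl ⟨ha, rfl⟩)),
          by rw [DD_AA (by omega) h2, DD_AA h1 h2]; exact hb⟩
      · exact ⟨0, by omega, by omega, Or.inr (Or.inr (Or.inr (Or.inl ⟨rfl, ha⟩))),
          by rw [DD_AA (by omega) h2, DD_AA h1 h2]; exact hb⟩
    · by_cases hz : u = m₁ - 1
      · refine ⟨m₁, by omega, by omega, Or.inl (by omega), ?_⟩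
        rw [DD_BB (by omega) h2, DD_AB h1 h2, Nat.sub_self]
        have e0 : cyc m₁ u (m₁-1) = 0 := by rw [hz]; exact cyc_self _ _
        have := cyc_comm m₂ (v-m₁) 0
        omega
      · have hpos' : 0 < cyc m₁ u (m₁-1) := by
          rcases Nat.eq_zero_or_pos (cyc m₁ u (m₁-1)) with h0 | h0
          · exact absurd (cyc_eq_zero _ _ _ h1 (by omega) h0) hz
          · exact h0
        rcases cycstep m₁ u (m₁-1) h1 (by omega) hpos' with ⟨ha, hb⟩|⟨ha, hb⟩|⟨ha, hb⟩|⟨ha, hb⟩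
        · exact ⟨u+1, by omega, by omega, Or.inl rfl,
            by rw [DD_AB ha h2, DD_AB h1 h2]; omega⟩
        · exact ⟨u-1, by omega, by omega, Or.inr (Or.inl (by omega)),
            by rw [DD_AB (by omega) h2, DD_AB h1 h2]; omega⟩
        · exact ⟨m₁-1, by omega, by omega, Or.inr (Or.inr (Or.inl ⟨ha, rfl⟩)),
            by rw [DD_AB (by omega) h2, DD_AB h1 h2]; omega⟩
        · exact ⟨0, by omega, by omega, Or.inr (Or.inr (Or.inr (Or.inl ⟨rfl, ha⟩))),
            by rw [DD_AB (by omega) h2, DD_AB h1 h2]; omega⟩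
  · -- u on the second cycle
    have hu' : u - m₁ < m₂ := by omega
    -- target in B-coordinates
    by_cases h2 : v < m₁
    · by_cases hz : u = m₁
      · refine ⟨m₁-1, by omega, by omega, Or.inr (Or.inl (by omega)), ?_⟩
        rw [DD_AA (by omega) h2, DD_BA h1 h2]
        have e0 : cyc m₂ (u-m₁) 0 = 0 := by rw [hz, Nat.sub_self]; exact cyc_self _ _
        have := cyc_comm m₁ (m₁-1) v
        omega
      · have hpos' : 0 < cyc m₂ (u-m₁) 0 := by
          rcases Nat.eq_zero_or_pos (cyc m₂ (u-m₁) 0) with h0 | h0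
          · have := cyc_eq_zero m₂ (u-m₁) 0 hu' (by omega) h0; omega
          · exact h0
        rcases cycstep m₂ (u-m₁) 0 hu' (by omega) hpos' with ⟨ha, hb⟩|⟨ha, hb⟩|⟨ha, hb⟩|⟨ha, hb⟩
        · refine ⟨u+1, by omega, by omega, Or.inl rfl, ?_⟩
          rw [DD_BA (by omega) h2, DD_BA h1 h2]
          have e : u+1-m₁ = u-m₁+1 := by omega
          rw [e]; omega
        · refine ⟨u-1, by omega, by omega, Or.inr (Or.inl (by omega)), ?_⟩
          rw [DD_BA (by omega) h2, DD_BA h1 h2]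
          have e : u-1-m₁ = u-m₁-1 := by omega
          rw [e]; omega
        · -- u-m₁ = 0 contradicts hz
          omega
        · -- u = m₁+m₂-1, move to m₁
          refine ⟨m₁, by omega, by omega, Or.inr (Or.inr (Or.inr (Or.inr (Or.inr ⟨rfl, by omega⟩)))), ?_⟩
          rw [DD_BA (by omega) h2, DD_BA h1 h2, Nat.sub_self]; omega
    · -- both in B
      rw [DD_BB h1 h2] at hpos
      have hv' : v - m₁ < m₂ := by omega
      rcases cycstep m₂ (u-m₁) (v-m₁) hu' hv' hpos with ⟨ha, hb⟩|⟨ha, hb⟩|⟨ha, hb⟩|⟨ha, hb⟩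
      · refine ⟨u+1, by omega, by omega, Or.inl rfl, ?_⟩
        rw [DD_BB (by omega) h2, DD_BB h1 h2]
        have e : u+1-m₁ = u-m₁+1 := by omega
        rw [e]; omega
      · by_cases hz : u = m₁
        · -- u-m₁ = 0, so 0 < u-m₁ is false
          omega
        · refine ⟨u-1, by omega, by omega, Or.inr (Or.inl (by omega)), ?_⟩
          rw [DD_BB (by omega) h2, DD_BB h1 h2]
          have e : u-1-m₁ = u-m₁-1 := by omega
          rw [e]; omega
      · -- u = m₁ : chord to m₁+m₂-1
        refine ⟨m₁+m₂-1, by omega, by omega, Or.inr (Or.inr (Or.inr (Or.inr (Or.inl ⟨by omega, rfl⟩)))), ?_⟩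
        rw [DD_BB (by omega) h2, DD_BB h1 h2]
        have e : m₁+m₂-1-m₁ = m₂-1 := by omega
        rw [e]; omega
      · -- u = m₁+m₂-1 : chord to m₁
        refine ⟨m₁, by omega, by omega, Or.inr (Or.inr (Or.inr (Or.inr (Or.inr ⟨rfl, by omega⟩)))), ?_⟩
        rw [DD_BB (by omega) h2, DD_BB h1 h2, Nat.sub_self]; omega

lemma DDlip (h₁ : 4 ≤ m₁) (h₂ : 4 ≤ m₂) {u x y : ℕ} (hu : u < m₁+m₂) (hx : x < m₁+m₂)
    (hy : y < m₁+m₂) (h : edgeD m₁ m₂ x y) : DDf m₁ m₂ u y ≤ DDf m₁ m₂ u x + 1 := by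
  have hcases : (x < m₁ ∧ y < m₁ ∧ edgeC m₁ x y) ∨
      (¬ x < m₁ ∧ ¬ y < m₁ ∧ edgeC m₂ (x-m₁) (y-m₁)) ∨
      (x = m₁-1 ∧ y = m₁) ∨ (x = m₁ ∧ y = m₁-1) := by
    unfold edgeD at h; unfold edgeC; omega
  rcases hcases with ⟨ha, hb, he⟩ | ⟨ha, hb, he⟩ | ⟨ha, hb⟩ | ⟨ha, hb⟩
  · by_cases h1 : u < m₁
    · rw [DD_AA h1 ha, DD_AA h1 hb]; exact cyclipL m₁ u x y h1 ha hb he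
    · rw [DD_BA h1 ha, DD_BA h1 hb]
      have := cyclipR m₁ (m₁-1) x y (by omega) ha hb he; omega
  · by_cases h1 : u < m₁
    · rw [DD_AB h1 ha, DD_AB h1 hb]
      have := cyclipR m₂ 0 (x-m₁) (y-m₁) (by omega) (by omega) (by omega) he; omega
    · rw [DD_BB h1 ha, DD_BB h1 hb]
      exact cyclipL m₂ (u-m₁) (x-m₁) (y-m₁) (by omega) (by omega) (by omega) he
  · rw [ha, hb]
    have hlt : m₁ - 1 < m₁ := by omega
    have hge : ¬ m₁ < m₁ := by omega
    by_cases h1 : u < m₁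
    · rw [DD_AB h1 hge, DD_AA h1 hlt, Nat.sub_self]
      have := cyc_self m₂ 0; omega
    · rw [DD_BB h1 hge, DD_BA h1 hlt, Nat.sub_self]
      have := cyc_self m₁ (m₁-1); omega
  · rw [ha, hb]
    have hlt : m₁ - 1 < m₁ := by omega
    have hge : ¬ m₁ < m₁ := by omega
    by_cases h1 : u < m₁
    · rw [DD_AA h1 hlt, DD_AB h1 hge, Nat.sub_self]
      have := cyc_self m₂ 0; omega
    · rw [DD_BA h1 hlt, DD_BB h1 hge, Nat.sub_self]
      have := cyc_self m₁ (m₁-1); omega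

/-! ### the lollipop distance function -/

def DLf (g u v : ℕ) : ℕ :=
  if u < g then
    if v < g then cyc g u v
    else cyc g u (g-1) + (v - (g-1))
  else
    if v < g then cyc g v (g-1) + (u - (g-1))
    else ddist u v


lemma DL_AA {u v : ℕ} (h1 : u < g) (h2 : v < g) : DLf g u v = cyc g u v := by
  rw [DLf, if_pos h1, if_pos h2]
lemma DL_AB {u v : ℕ} (h1 : u < g) (h2 : ¬ v < g) :
    DLf g u v = cyc g u (g-1) + (v - (g-1)) := by
  rw [DLf, if_pos h1, if_neg h2]
lemma DL_BA {u v : ℕ} (h1 : ¬ u < g) (h2 : v < g) :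
    DLf g u v = cyc g v (g-1) + (u - (g-1)) := by
  rw [DLf, if_neg h1, if_pos h2]
lemma DL_BB {u v : ℕ} (h1 : ¬ u < g) (h2 : ¬ v < g) : DLf g u v = ddist u v := by
  rw [DLf, if_neg h1, if_neg h2]

lemma DL_self (u : ℕ) : DLf g u u = 0 := by
  by_cases h : u < g
  · rw [DL_AA h h, cyc_self]
  · rw [DL_BB h h]; simp only [ddist]; omega

lemma DL_zero (hg : 6 ≤ g) {u v : ℕ} (hu : u < g+2) (hv : v < g+2)
    (h : DLf g u v = 0) : u = v := by
  by_cases h1 : u < g <;> by_cases h2 : v < g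
  · rw [DL_AA h1 h2] at h; exact cyc_eq_zero _ _ _ h1 h2 h
  · rw [DL_AB h1 h2] at h; omega
  · rw [DL_BA h1 h2] at h; omega
  · rw [DL_BB h1 h2] at h; simp only [ddist] at h; omega

lemma DLstep (hg : 6 ≤ g) {u v : ℕ} (hu : u < g+2) (hv : v < g+2)
    (hpos : 0 < DLf g u v) :
    ∃ w, w < g+2 ∧ w ≠ u ∧ edgeC g u w ∧ DLf g w v < DLf g u v := by
  by_cases h1 : u < g
  · by_cases h2 : v < g
    · rw [DL_AA h1 h2] at hpos
      rcases cycstep g u v h1 h2 hpos with ⟨ha, hb⟩ | ⟨ha, hb⟩ | ⟨ha, hb⟩ | ⟨ha, hb⟩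
      · exact ⟨u+1, by omega, by omega, Or.inl rfl,
          by rw [DL_AA ha h2, DL_AA h1 h2]; exact hb⟩
      · exact ⟨u-1, by omega, by omega, Or.inr (Or.inl (by omega)),
          by rw [DL_AA (by omega) h2, DL_AA h1 h2]; exact hb⟩
      · exact ⟨g-1, by omega, by omega, Or.inr (Or.inr (Or.inl ⟨ha, rfl⟩)),
          by rw [DL_AA (by omega) h2, DL_AA h1 h2]; exact hb⟩
      · exact ⟨0, by omega, by omega, Or.inr (Or.inr (Or.inr ⟨rfl, ha⟩)),
          by rw [DL_AA (by omega) h2, DL_AA h1 h2]; exact hb⟩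
    · by_cases hz : u = g - 1
      · refine ⟨g, by omega, by omega, Or.inl (by omega), ?_⟩
        rw [DL_BB (by omega) h2, DL_AB h1 h2, hz]
        have := cyc_self g (g-1)
        simp only [ddist]; omega
      · have hpos' : 0 < cyc g u (g-1) := by
          rcases Nat.eq_zero_or_pos (cyc g u (g-1)) with h0 | h0
          · exact absurd (cyc_eq_zero _ _ _ h1 (by omega) h0) hz
          · exact h0
        rcases cycstep g u (g-1) h1 (by omega) hpos' with ⟨ha, hb⟩|⟨ha, hb⟩|⟨ha, hb⟩|⟨ha, hb⟩
        · exact ⟨u+1, by omega, by omega, Or.inl rfl,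
            by rw [DL_AB ha h2, DL_AB h1 h2]; omega⟩
        · exact ⟨u-1, by omega, by omega, Or.inr (Or.inl (by omega)),
            by rw [DL_AB (by omega) h2, DL_AB h1 h2]; omega⟩
        · exact ⟨g-1, by omega, by omega, Or.inr (Or.inr (Or.inl ⟨ha, rfl⟩)),
            by rw [DL_AB (by omega) h2, DL_AB h1 h2]; omega⟩
        · exact ⟨0, by omega, by omega, Or.inr (Or.inr (Or.inr ⟨rfl, ha⟩)),
            by rw [DL_AB (by omega) h2, DL_AB h1 h2]; omega⟩
  · by_cases h2 : v < g
    · by_cases hz : u = g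
      · refine ⟨g-1, by omega, by omega, Or.inr (Or.inl (by omega)), ?_⟩
        rw [DL_AA (by omega) h2, DL_BA h1 h2, hz]
        have := cyc_comm g (g-1) v
        omega
      · -- u = g+1, move to g
        refine ⟨g, by omega, by omega, Or.inr (Or.inl (by omega)), ?_⟩
        rw [DL_BA (by omega) h2, DL_BA h1 h2]
        omega
    · -- both in tail
      rw [DL_BB h1 h2] at hpos
      have huv : (u = g ∧ v = g+1) ∨ (u = g+1 ∧ v = g) := by
        simp only [ddist] at hpos; omega
      rcases huv with ⟨ha, hb⟩ | ⟨ha, hb⟩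
      · refine ⟨u+1, by omega, by omega, Or.inl rfl, ?_⟩
        rw [DL_BB (by omega) h2, DL_BB h1 h2]
        simp only [ddist]; omega
      · refine ⟨u-1, by omega, by omega, Or.inr (Or.inl (by omega)), ?_⟩
        rw [DL_BB (by omega) h2, DL_BB h1 h2]
        simp only [ddist]; omega

lemma DLlip (hg : 6 ≤ g) {u x y : ℕ} (hu : u < g+2) (hx : x < g+2)
    (hy : y < g+2) (h : edgeC g x y) : DLf g u y ≤ DLf g u x + 1 := by
  have hcases : (x < g ∧ y < g ∧ edgeC g x y) ∨
      (x = g-1 ∧ y = g) ∨ (x = g ∧ y = g-1) ∨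
      (g ≤ x ∧ g ≤ y ∧ (x+1 = y ∨ y+1 = x)) := by
    unfold edgeC at h ⊢; omega
  rcases hcases with ⟨ha, hb, he⟩ | ⟨ha, hb⟩ | ⟨ha, hb⟩ | ⟨ha, hb, he⟩
  · by_cases h1 : u < g
    · rw [DL_AA h1 ha, DL_AA h1 hb]; exact cyclipL g u x y h1 ha hb he
    · rw [DL_BA h1 ha, DL_BA h1 hb]
      have := cyclipR g (g-1) x y (by omega) ha hb he; omega
  · rw [ha, hb]
    have hlt : g - 1 < g := by omega
    have hge : ¬ g < g := by omega
    by_cases h1 : u < g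
    · rw [DL_AB h1 hge, DL_AA h1 hlt]; omega
    · rw [DL_BB h1 hge, DL_BA h1 hlt]
      have := cyc_self g (g-1); simp only [ddist]; omega
  · rw [ha, hb]
    have hlt : g - 1 < g := by omega
    have hge : ¬ g < g := by omega
    by_cases h1 : u < g
    · rw [DL_AA h1 hlt, DL_AB h1 hge]; omega
    · rw [DL_BA h1 hlt, DL_BB h1 hge]
      have := cyc_self g (g-1); simp only [ddist]; omega
  · have hxg : ¬ x < g := by omega
    have hyg : ¬ y < g := by omega
    by_cases h1 : u < g
    · rw [DL_AB h1 hxg, DL_AB h1 hyg]; omega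
    · rw [DL_BB h1 hxg, DL_BB h1 hyg]; simp only [ddist]; omega

lemma sum_split (a b : ℕ) (f : ℕ → ℕ) :
    ∑ i ∈ range (a+b), f i = (∑ i ∈ range a, f i) + ∑ j ∈ range b, f (a+j) := by
  induction b with
  | zero => simp
  | succ b ih =>
    have h : a + (b+1) = (a+b) + 1 := by omega
    rw [h, Finset.sum_range_succ, ih, Finset.sum_range_succ]
    omega

lemma sum_min : ∀ m : ℕ, ∑ j ∈ range m, min j (m - j) = m*m/4 := by
  intro m
  induction m using Nat.strong_induction_on with
  | _ m ih =>
    match m with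
    | 0 => simp
    | 1 => simp
    | (m+2) =>
      rw [Finset.sum_range_succ', Finset.sum_range_succ]
      have h1 : ∑ k ∈ range m, min (k+1) (m + 2 - (k+1)) =
          (∑ k ∈ range m, min k (m - k)) + m := by
        have h1' : ∑ k ∈ range m, min (k+1) (m + 2 - (k+1)) =
            ∑ k ∈ range m, (min k (m - k) + 1) := by
          refine Finset.sum_congr rfl fun k hk => ?_
          have hkm : k < m := Finset.mem_range.mp hk
          omega
        rw [h1', Finset.sum_add_distrib, Finset.sum_const, Finset.card_range, smul_eq_mul,
          mul_one]
      rw [h1, ih m (by omega)]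
      have h2 : (m+2)*(m+2) = m*m + (m+1)*4 := by ring
      omega

lemma sum_cyc (m u : ℕ) (hu : u < m) : ∑ v ∈ range m, cyc m u v = m*m/4 := by
  rw [← sum_min m]
  refine Finset.sum_nbij' (i := fun v => if u ≤ v then v - u else v + m - u)
    (j := fun j => if u + j < m then u + j else u + j - m) ?_ ?_ ?_ ?_ ?_
  · intro a ha; simp only [Finset.mem_range] at *; split_ifs <;> omega
  · intro a ha; simp only [Finset.mem_range] at *; split_ifs <;> omega
  · intro a ha; simp only [Finset.mem_range] at ha; split_ifs <;> omega
  · intro a ha; simp only [Finset.mem_range] at ha; split_ifs <;> omega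
  · intro a ha; simp only [Finset.mem_range] at ha
    simp only [cyc, ddist]; split_ifs <;> omega

lemma sum_cyc_hub (m t : ℕ) (ht : t < m) : ∑ v ∈ range m, cyc m v t = m*m/4 := by
  rw [← sum_cyc m t ht]
  exact Finset.sum_congr rfl fun v _ => cyc_comm m v t

lemma rowA (h₁ : 4 ≤ m₁) (h₂ : 4 ≤ m₂) (u : ℕ) (hu : u < m₁) :
    ∑ v ∈ range (m₁+m₂), DDf m₁ m₂ u v
      = (m₁*m₁/4 + m₂ + m₂*m₂/4) + m₂ * cyc m₁ u (m₁-1) := by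
  rw [sum_split]
  have e1 : ∑ v ∈ range m₁, DDf m₁ m₂ u v = m₁*m₁/4 := by
    rw [← sum_cyc m₁ u hu]
    exact sum_congr rfl fun v hv => DD_AA hu (mem_range.mp hv)
  have e2 : ∑ j ∈ range m₂, DDf m₁ m₂ u (m₁+j)
      = m₂ * (cyc m₁ u (m₁-1) + 1) + m₂*m₂/4 := by
    have ept : ∀ j ∈ range m₂, DDf m₁ m₂ u (m₁+j)
        = (cyc m₁ u (m₁-1) + 1) + cyc m₂ j 0 := by
      intro j hj
      rw [DD_AB hu (by omega)]
      have e : m₁ + j - m₁ = j := by omega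
      rw [e]
    rw [sum_congr rfl ept, Finset.sum_add_distrib, Finset.sum_const, card_range, smul_eq_mul,
      sum_cyc_hub m₂ 0 (by omega)]
  rw [e1, e2]; ring

lemma rowB (h₁ : 4 ≤ m₁) (h₂ : 4 ≤ m₂) (j : ℕ) (hj : j < m₂) :
    ∑ v ∈ range (m₁+m₂), DDf m₁ m₂ (m₁+j) v
      = (m₁*m₁/4 + m₁ + m₂*m₂/4) + m₁ * cyc m₂ j 0 := by
  rw [sum_split]
  have e1 : ∑ v ∈ range m₁, DDf m₁ m₂ (m₁+j) v
      = m₁*m₁/4 + m₁ * (1 + cyc m₂ j 0) := by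
    have ept : ∀ v ∈ range m₁, DDf m₁ m₂ (m₁+j) v
        = cyc m₁ v (m₁-1) + (1 + cyc m₂ j 0) := by
      intro v hv
      rw [DD_BA (by omega) (mem_range.mp hv)]
      have e : m₁ + j - m₁ = j := by omega
      rw [e]; ring
    rw [sum_congr rfl ept, Finset.sum_add_distrib, Finset.sum_const, card_range, smul_eq_mul,
      sum_cyc_hub m₁ (m₁-1) (by omega)]
  have e2 : ∑ k ∈ range m₂, DDf m₁ m₂ (m₁+j) (m₁+k) = m₂*m₂/4 := by
    have ept : ∀ k ∈ range m₂, DDf m₁ m₂ (m₁+j) (m₁+k) = cyc m₂ j k := by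
      intro k hk
      rw [DD_BB (by omega) (by omega)]
      have e : m₁ + j - m₁ = j := by omega
      have e' : m₁ + k - m₁ = k := by omega
      rw [e, e']
    rw [sum_congr rfl ept, sum_cyc m₂ j hj]
  rw [e1, e2]; ring

lemma SD_val (h₁ : 4 ≤ m₁) (h₂ : 4 ≤ m₂) :
    ∑ u ∈ range (m₁+m₂), ∑ v ∈ range (m₁+m₂), DDf m₁ m₂ u v
      = m₁*(m₁*m₁/4) + m₂*(m₂*m₂/4) + 2*m₂*(m₁*m₁/4) + 2*m₁*(m₂*m₂/4) + 2*(m₁*m₂) := by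
  rw [sum_split]
  have eA : ∑ u ∈ range m₁, ∑ v ∈ range (m₁+m₂), DDf m₁ m₂ u v
      = m₁ * (m₁*m₁/4 + m₂ + m₂*m₂/4) + m₂ * (m₁*m₁/4) := by
    rw [sum_congr rfl (fun u hu => rowA h₁ h₂ u (mem_range.mp hu)), Finset.sum_add_distrib,
      Finset.sum_const, card_range, smul_eq_mul, ← Finset.mul_sum,
      sum_cyc_hub m₁ (m₁-1) (by omega)]
  have eB : ∑ j ∈ range m₂, ∑ v ∈ range (m₁+m₂), DDf m₁ m₂ (m₁+j) v
      = m₂ * (m₁*m₁/4 + m₁ + m₂*m₂/4) + m₁ * (m₂*m₂/4) := by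
    rw [sum_congr rfl (fun j hj => rowB h₁ h₂ j (mem_range.mp hj)), Finset.sum_add_distrib,
      Finset.sum_const, card_range, smul_eq_mul, ← Finset.mul_sum,
      sum_cyc_hub m₂ 0 (by omega)]
  rw [eA, eB]; ring

lemma rowLA (hg : 6 ≤ g) (u : ℕ) (hu : u < g) :
    ∑ v ∈ range (g+2), DLf g u v = (g*g/4 + 3) + 2 * cyc g u (g-1) := by
  rw [sum_split]
  have e1 : ∑ v ∈ range g, DLf g u v = g*g/4 := by
    rw [← sum_cyc g u hu]
    exact sum_congr rfl fun v hv => DL_AA hu (mem_range.mp hv)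
  have e2 : ∑ j ∈ range 2, DLf g u (g+j) = 2 * cyc g u (g-1) + 3 := by
    rw [Finset.sum_range_succ, Finset.sum_range_one,
      DL_AB hu (show ¬ g+0 < g by omega), DL_AB hu (show ¬ g+1 < g by omega)]
    have e : g+0-(g-1) = 1 := by omega
    have e' : g+1-(g-1) = 2 := by omega
    rw [e, e']; ring
  rw [e1, e2]; ring

lemma rowL_g (hg : 6 ≤ g) : ∑ v ∈ range (g+2), DLf g g v = g*g/4 + g + 1 := by
  rw [sum_split]
  have e1 : ∑ v ∈ range g, DLf g g v = g*g/4 + g := by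
    have ept : ∀ v ∈ range g, DLf g g v = cyc g v (g-1) + 1 := by
      intro v hv
      rw [DL_BA (by omega) (mem_range.mp hv)]
      have e : g - (g-1) = 1 := by omega
      rw [e]
    rw [sum_congr rfl ept, Finset.sum_add_distrib, Finset.sum_const, card_range, smul_eq_mul,
      sum_cyc_hub g (g-1) (by omega)]
    ring
  have e2 : ∑ j ∈ range 2, DLf g g (g+j) = 1 := by
    rw [Finset.sum_range_succ, Finset.sum_range_one,
      DL_BB (show ¬ g < g by omega) (show ¬ g+0 < g by omega),
      DL_BB (show ¬ g < g by omega) (show ¬ g+1 < g by omega)]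
    simp only [ddist]; omega
  rw [e1, e2]

lemma rowL_g1 (hg : 6 ≤ g) : ∑ v ∈ range (g+2), DLf g (g+1) v = g*g/4 + 2*g + 1 := by
  rw [sum_split]
  have e1 : ∑ v ∈ range g, DLf g (g+1) v = g*g/4 + 2*g := by
    have ept : ∀ v ∈ range g, DLf g (g+1) v = cyc g v (g-1) + 2 := by
      intro v hv
      rw [DL_BA (by omega) (mem_range.mp hv)]
      have e : g + 1 - (g-1) = 2 := by omega
      rw [e]
    rw [sum_congr rfl ept, Finset.sum_add_distrib, Finset.sum_const, card_range, smul_eq_mul,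
      sum_cyc_hub g (g-1) (by omega)]
    ring
  have e2 : ∑ j ∈ range 2, DLf g (g+1) (g+j) = 1 := by
    rw [Finset.sum_range_succ, Finset.sum_range_one,
      DL_BB (show ¬ g+1 < g by omega) (show ¬ g+0 < g by omega),
      DL_BB (show ¬ g+1 < g by omega) (show ¬ g+1 < g by omega)]
    simp only [ddist]; omega
  rw [e1, e2]

lemma SL_val (hg : 6 ≤ g) :
    ∑ u ∈ range (g+2), ∑ v ∈ range (g+2), DLf g u v
      = g*(g*g/4) + 4*(g*g/4) + 6*g + 2 := by
  rw [sum_split]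
  have eA : ∑ u ∈ range g, ∑ v ∈ range (g+2), DLf g u v
      = g * (g*g/4 + 3) + 2 * (g*g/4) := by
    rw [sum_congr rfl (fun u hu => rowLA hg u (mem_range.mp hu)), Finset.sum_add_distrib,
      Finset.sum_const, card_range, smul_eq_mul, ← Finset.mul_sum,
      sum_cyc_hub g (g-1) (by omega)]
  have eB : ∑ j ∈ range 2, ∑ v ∈ range (g+2), DLf g (g+j) v
      = (g*g/4 + g + 1) + (g*g/4 + 2*g + 1) := by
    rw [Finset.sum_range_succ, Finset.sum_range_one]
    rw [show g + 0 = g from rfl, rowL_g hg, rowL_g1 hg]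
  rw [eA, eB]
  have h2 : g*(g*g/4+3) = g*(g*g/4) + 3*g := by ring
  omega

/-! ### generic metric machinery -/

lemma exists_walk_of_step {V : Type*} (G : SimpleGraph V) (D : V → V → ℕ)
    (h0 : ∀ u v, D u v = 0 → u = v)
    (hstep : ∀ u v, 0 < D u v → ∃ w, G.Adj u w ∧ D w v < D u v) :
    ∀ u v, ∃ p : G.Walk u v, p.length ≤ D u v := by
  suffices h : ∀ k u v, D u v ≤ k → ∃ p : G.Walk u v, p.length ≤ D u v from
    fun u v => h (D u v) u v le_rfl
  intro k
  induction k with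
  | zero =>
    intro u v h
    obtain rfl := h0 u v (Nat.le_zero.mp h)
    exact ⟨.nil, by simp⟩
  | succ k ih =>
    intro u v h
    rcases Nat.eq_zero_or_pos (D u v) with h0' | hpos
    · obtain rfl := h0 u v h0'
      exact ⟨.nil, by simp⟩
    · obtain ⟨w, hadj, hlt⟩ := hstep u v hpos
      obtain ⟨p, hp⟩ := ih w v (by omega)
      exact ⟨.cons hadj p, by simp only [SimpleGraph.Walk.length_cons]; omega⟩

lemma lip_le_length {V : Type*} {G : SimpleGraph V} (f : V → ℕ)
    (hf : ∀ x y : V, G.Adj x y → f y ≤ f x + 1) :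
    ∀ {u v : V} (p : G.Walk u v), f v ≤ f u + p.length := by
  intro u v p
  induction p with
  | nil => simp
  | cons h p ih =>
    have := hf _ _ h
    simp only [SimpleGraph.Walk.length_cons]
    omega

lemma dist_eq_D {V : Type*} (G : SimpleGraph V) (D : V → V → ℕ)
    (h0 : ∀ u v, D u v = 0 → u = v)
    (hrfl : ∀ u, D u u = 0)
    (hstep : ∀ u v, 0 < D u v → ∃ w, G.Adj u w ∧ D w v < D u v)
    (hlip : ∀ u x y, G.Adj x y → D u y ≤ D u x + 1)
    (u v : V) : G.dist u v = D u v := by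
  obtain ⟨p, hp⟩ := exists_walk_of_step G D h0 hstep u v
  have h1 : G.dist u v ≤ D u v := le_trans (SimpleGraph.dist_le p) hp
  have hr : G.Reachable u v := ⟨p⟩
  obtain ⟨q, hq⟩ := hr.exists_walk_length_eq_dist
  have h2 := lip_le_length (G := G) (f := D u) (fun x y h => hlip u x y h) q
  rw [hrfl u, hq] at h2
  omega

/-! ### adjacency characterizations -/

lemma dumbbell_adj {n : ℕ} (hn : n = m₁+m₂) (h₁ : 4 ≤ m₁) (h₂ : 4 ≤ m₂) (i j : Fin n) :
    (dumbbell n m₁ m₂).Adj i j ↔ ((i:ℕ) ≠ (j:ℕ) ∧ edgeD m₁ m₂ (i:ℕ) (j:ℕ)) := by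
  rw [dumbbell, SimpleGraph.fromRel_adj]
  have hne : (i ≠ j) ↔ ((i:ℕ) ≠ (j:ℕ)) := by simp [Fin.ext_iff]
  rw [hne]
  subst hn
  unfold edgeD
  constructor
  · rintro ⟨hA, hB⟩; exact ⟨hA, by omega⟩
  · rintro ⟨hA, hB⟩; exact ⟨hA, by omega⟩

lemma lollipop_adj {n : ℕ} (hn : n = g+2) (hg : 6 ≤ g) (i j : Fin n) :
    (lollipop n (n-2)).Adj i j ↔ ((i:ℕ) ≠ (j:ℕ) ∧ edgeC g (i:ℕ) (j:ℕ)) := by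
  rw [lollipop, SimpleGraph.fromRel_adj]
  have hne : (i ≠ j) ↔ ((i:ℕ) ≠ (j:ℕ)) := by simp [Fin.ext_iff]
  rw [hne]
  subst hn
  unfold edgeC
  constructor
  · rintro ⟨hA, hB⟩; exact ⟨hA, by omega⟩
  · rintro ⟨hA, hB⟩; exact ⟨hA, by omega⟩

/-! ### distance identification -/

lemma dist_dumbbell {n : ℕ} (hn : n = m₁+m₂) (h₁ : 4 ≤ m₁) (h₂ : 4 ≤ m₂) (u v : Fin n) :
    (dumbbell n m₁ m₂).dist u v = DDf m₁ m₂ (u:ℕ) (v:ℕ) := by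
  refine dist_eq_D _ (fun a b : Fin n => DDf m₁ m₂ (a:ℕ) (b:ℕ)) ?_ ?_ ?_ ?_ u v
  · intro a b h
    exact Fin.ext (DD_zero h₁ h₂ (hn ▸ a.isLt) (hn ▸ b.isLt) h)
  · intro a; exact DD_self _
  · intro a b hpos
    obtain ⟨w, hw, hwa, he, hlt⟩ := DDstep h₁ h₂ (hn ▸ a.isLt) (hn ▸ b.isLt) hpos
    refine ⟨⟨w, by omega⟩, ?_, hlt⟩
    rw [dumbbell_adj hn h₁ h₂]
    exact ⟨by simpa using fun hh => hwa hh.symm, he⟩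
  · intro a x y hadj
    rw [dumbbell_adj hn h₁ h₂] at hadj
    exact DDlip h₁ h₂ (hn ▸ a.isLt) (hn ▸ x.isLt) (hn ▸ y.isLt) hadj.2

lemma dist_lollipop {n : ℕ} (hn : n = g+2) (hg : 6 ≤ g) (u v : Fin n) :
    (lollipop n (n-2)).dist u v = DLf g (u:ℕ) (v:ℕ) := by
  refine dist_eq_D _ (fun a b : Fin n => DLf g (a:ℕ) (b:ℕ)) ?_ ?_ ?_ ?_ u v
  · intro a b h
    exact Fin.ext (DL_zero hg (hn ▸ a.isLt) (hn ▸ b.isLt) h)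
  · intro a; exact DL_self _
  · intro a b hpos
    obtain ⟨w, hw, hwa, he, hlt⟩ := DLstep hg (hn ▸ a.isLt) (hn ▸ b.isLt) hpos
    refine ⟨⟨w, by omega⟩, ?_, hlt⟩
    rw [lollipop_adj hn hg]
    exact ⟨by simpa using fun hh => hwa hh.symm, he⟩
  · intro a x y hadj
    rw [lollipop_adj hn hg] at hadj
    exact DLlip hg (hn ▸ a.isLt) (hn ▸ x.isLt) (hn ▸ y.isLt) hadj.2

/-! ### Wiener index evaluation -/

lemma wiener_dumbbell {n : ℕ} (hn : n = m₁+m₂) (h₁ : 4 ≤ m₁) (h₂ : 4 ≤ m₂) :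
    wienerIndex (dumbbell n m₁ m₂)
      = (∑ u ∈ range (m₁+m₂), ∑ v ∈ range (m₁+m₂), DDf m₁ m₂ u v) / 2 := by
  subst hn
  unfold wienerIndex
  congr 1
  have h1 : ∀ u : Fin (m₁+m₂), ∑ v : Fin (m₁+m₂), (dumbbell (m₁+m₂) m₁ m₂).dist u v
      = ∑ v ∈ range (m₁+m₂), DDf m₁ m₂ (u:ℕ) v := by
    intro u
    rw [← Fin.sum_univ_eq_sum_range (fun v => DDf m₁ m₂ (u:ℕ) v) (m₁+m₂)]
    exact Finset.sum_congr rfl fun v _ => dist_dumbbell rfl h₁ h₂ u v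
  rw [Finset.sum_congr rfl fun u _ => h1 u,
    ← Fin.sum_univ_eq_sum_range (fun u => ∑ v ∈ range (m₁+m₂), DDf m₁ m₂ u v) (m₁+m₂)]

lemma wiener_lollipop {n : ℕ} (hn : n = g+2) (hg : 6 ≤ g) :
    wienerIndex (lollipop n (n-2))
      = (∑ u ∈ range (g+2), ∑ v ∈ range (g+2), DLf g u v) / 2 := by
  subst hn
  unfold wienerIndex
  congr 1
  have h1 : ∀ u : Fin (g+2), ∑ v : Fin (g+2), (lollipop (g+2) ((g+2)-2)).dist u v
      = ∑ v ∈ range (g+2), DLf g (u:ℕ) v := by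
    intro u
    rw [← Fin.sum_univ_eq_sum_range (fun v => DLf g (u:ℕ) v) (g+2)]
    exact Finset.sum_congr rfl fun v _ => dist_lollipop rfl hg u v
  rw [Finset.sum_congr rfl fun u _ => h1 u,
    ← Fin.sum_univ_eq_sum_range (fun u => ∑ v ∈ range (g+2), DLf g u v) (g+2)]

lemma final_ineq (m₁ m₂ : ℕ) (h₁ : 4 ≤ m₁) (h₂ : 4 ≤ m₂) :
    (m₁*(m₁*m₁/4) + m₂*(m₂*m₂/4) + 2*m₂*(m₁*m₁/4) + 2*m₁*(m₂*m₂/4) + 2*(m₁*m₂)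
      ≤ (m₁+m₂-2)*((m₁+m₂-2)*(m₁+m₂-2)/4) + 4*((m₁+m₂-2)*(m₁+m₂-2)/4) + 6*(m₁+m₂-2) + 2)
    ∧ (¬(m₁ = 4 ∧ m₂ = 4) →
      m₁*(m₁*m₁/4) + m₂*(m₂*m₂/4) + 2*m₂*(m₁*m₁/4) + 2*m₁*(m₂*m₂/4) + 2*(m₁*m₂) + 2
      ≤ (m₁+m₂-2)*((m₁+m₂-2)*(m₁+m₂-2)/4) + 4*((m₁+m₂-2)*(m₁+m₂-2)/4) + 6*(m₁+m₂-2) + 2) := by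
  obtain ⟨c, hc⟩ : ∃ c, m₁ = 2*c+4 ∨ m₁ = 2*c+5 := ⟨(m₁-4)/2, by omega⟩
  obtain ⟨d, hd⟩ : ∃ d, m₂ = 2*d+4 ∨ m₂ = 2*d+5 := ⟨(m₂-4)/2, by omega⟩
  rcases hc with hc | hc <;> rcases hd with hd | hd <;> subst hc hd
  · have e₁ : (2*c+4)*(2*c+4)/4 = (c+2)*(c+2) := by
      have h : (2*c+4)*(2*c+4) = ((c+2)*(c+2))*4 := by ring
      omega
    have e₂ : (2*d+4)*(2*d+4)/4 = (d+2)*(d+2) := by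
      have h : (2*d+4)*(2*d+4) = ((d+2)*(d+2))*4 := by ring
      omega
    have hgv : 2*c+4+(2*d+4)-2 = 2*(c+d+3) := by omega
    have eg : (2*c+4+(2*d+4)-2)*((2*c+4+(2*d+4)-2)*(2*c+4+(2*d+4)-2)/4)
        + 4*((2*c+4+(2*d+4)-2)*(2*c+4+(2*d+4)-2)/4) + 6*(2*c+4+(2*d+4)-2) + 2
        = (2*(c+d+3))*((c+d+3)*(c+d+3)) + 4*((c+d+3)*(c+d+3)) + 6*(2*(c+d+3)) + 2 := by
      rw [hgv]
      have h : (2*(c+d+3))*(2*(c+d+3)) = ((c+d+3)*(c+d+3))*4 := by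
        ring
      have h2 : (2*(c+d+3))*(2*(c+d+3))/4 = (c+d+3)*(c+d+3) := by omega
      rw [h2]
    rw [e₁, e₂, eg]
    have key : 2*(c+d+3)*((c+d+3)*(c+d+3)) + 4*((c+d+3)*(c+d+3)) + 6*(2*(c+d+3)) + 2
        = ((2*c+4)*((c+2)*(c+2)) + (2*d+4)*((d+2)*(d+2)) + 2*(2*d+4)*((c+2)*(c+2))
          + 2*(2*c+4)*((d+2)*(d+2)) + 2*((2*c+4)*(2*d+4)))
          + (2*(c+d) + (2*(c*c)+2*(d*d)+4*(c*d)+2*(c*(d*d))+2*((c*c)*d))) := by ring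
    constructor
    · linarith [key, Nat.zero_le (c*c*d), Nat.zero_le (c*(d*d)), Nat.zero_le (c*d), Nat.zero_le (c*c), Nat.zero_le (d*d), Nat.zero_le c, Nat.zero_le d]
    · intro hne
      have h5 : 1 ≤ c + d := by omega
      linarith [key, Nat.zero_le (c*c*d), Nat.zero_le (c*(d*d)), Nat.zero_le (c*d), Nat.zero_le (c*c), Nat.zero_le (d*d), Nat.zero_le c, Nat.zero_le d]
  · have e₁ : (2*c+4)*(2*c+4)/4 = (c+2)*(c+2) := by
      have h : (2*c+4)*(2*c+4) = ((c+2)*(c+2))*4 := by ring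
      omega
    have e₂ : (2*d+5)*(2*d+5)/4 = (d+2)*(d+3) := by
      have h : (2*d+5)*(2*d+5) = ((d+2)*(d+3))*4+1 := by ring
      omega
    have hgv : 2*c+4+(2*d+5)-2 = 2*(c+d+3)+1 := by omega
    have eg : (2*c+4+(2*d+5)-2)*((2*c+4+(2*d+5)-2)*(2*c+4+(2*d+5)-2)/4)
        + 4*((2*c+4+(2*d+5)-2)*(2*c+4+(2*d+5)-2)/4) + 6*(2*c+4+(2*d+5)-2) + 2
        = (2*(c+d+3)+1)*((c+d+3)*(c+d+4)) + 4*((c+d+3)*(c+d+4)) + 6*(2*(c+d+3)+1) + 2 := by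
      rw [hgv]
      have h : (2*(c+d+3)+1)*(2*(c+d+3)+1) = ((c+d+3)*(c+d+4))*4+1 := by ring
      have h2 : (2*(c+d+3)+1)*(2*(c+d+3)+1)/4 = (c+d+3)*(c+d+4) := by omega
      rw [h2]
    rw [e₁, e₂, eg]
    have key : (2*(c+d+3)+1)*((c+d+3)*(c+d+4)) + 4*((c+d+3)*(c+d+4)) + 6*(2*(c+d+3)+1) + 2
        = ((2*c+4)*((c+2)*(c+2)) + (2*d+5)*((d+2)*(d+3)) + 2*(2*d+5)*((c+2)*(c+2))
          + 2*(2*c+4)*((d+2)*(d+3)) + 2*((2*c+4)*(2*d+5)))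
          + (2 + (4*d+2*(d*d)+5*c+6*(c*d)+2*(c*(d*d))+3*(c*c)+2*((c*c)*d))) := by ring
    exact ⟨by linarith [key, Nat.zero_le (c*c*d), Nat.zero_le (c*(d*d)), Nat.zero_le (c*d), Nat.zero_le (c*c), Nat.zero_le (d*d), Nat.zero_le c, Nat.zero_le d], fun _ => by linarith [key, Nat.zero_le (c*c*d), Nat.zero_le (c*(d*d)), Nat.zero_le (c*d), Nat.zero_le (c*c), Nat.zero_le (d*d), Nat.zero_le c, Nat.zero_le d]⟩
  · have e₁ : (2*c+5)*(2*c+5)/4 = (c+2)*(c+3) := by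
      have h : (2*c+5)*(2*c+5) = ((c+2)*(c+3))*4+1 := by ring
      omega
    have e₂ : (2*d+4)*(2*d+4)/4 = (d+2)*(d+2) := by
      have h : (2*d+4)*(2*d+4) = ((d+2)*(d+2))*4 := by ring
      omega
    have hgv : 2*c+5+(2*d+4)-2 = 2*(c+d+3)+1 := by omega
    have eg : (2*c+5+(2*d+4)-2)*((2*c+5+(2*d+4)-2)*(2*c+5+(2*d+4)-2)/4)
        + 4*((2*c+5+(2*d+4)-2)*(2*c+5+(2*d+4)-2)/4) + 6*(2*c+5+(2*d+4)-2) + 2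
        = (2*(c+d+3)+1)*((c+d+3)*(c+d+4)) + 4*((c+d+3)*(c+d+4)) + 6*(2*(c+d+3)+1) + 2 := by
      rw [hgv]
      have h : (2*(c+d+3)+1)*(2*(c+d+3)+1) = ((c+d+3)*(c+d+4))*4+1 := by ring
      have h2 : (2*(c+d+3)+1)*(2*(c+d+3)+1)/4 = (c+d+3)*(c+d+4) := by omega
      rw [h2]
    rw [e₁, e₂, eg]
    have key : (2*(c+d+3)+1)*((c+d+3)*(c+d+4)) + 4*((c+d+3)*(c+d+4)) + 6*(2*(c+d+3)+1) + 2
        = ((2*c+5)*((c+2)*(c+3)) + (2*d+4)*((d+2)*(d+2)) + 2*(2*d+4)*((c+2)*(c+3))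
          + 2*(2*c+5)*((d+2)*(d+2)) + 2*((2*c+5)*(2*d+4)))
          + (2 + (5*d+3*(d*d)+4*c+6*(c*d)+2*(c*(d*d))+2*(c*c)+2*((c*c)*d))) := by ring
    exact ⟨by linarith [key, Nat.zero_le (c*c*d), Nat.zero_le (c*(d*d)), Nat.zero_le (c*d), Nat.zero_le (c*c), Nat.zero_le (d*d), Nat.zero_le c, Nat.zero_le d], fun _ => by linarith [key, Nat.zero_le (c*c*d), Nat.zero_le (c*(d*d)), Nat.zero_le (c*d), Nat.zero_le (c*c), Nat.zero_le (d*d), Nat.zero_le c, Nat.zero_le d]⟩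
  · have e₁ : (2*c+5)*(2*c+5)/4 = (c+2)*(c+3) := by
      have h : (2*c+5)*(2*c+5) = ((c+2)*(c+3))*4+1 := by ring
      omega
    have e₂ : (2*d+5)*(2*d+5)/4 = (d+2)*(d+3) := by
      have h : (2*d+5)*(2*d+5) = ((d+2)*(d+3))*4+1 := by ring
      omega
    have hgv : 2*c+5+(2*d+5)-2 = 2*(c+d+4) := by omega
    have eg : (2*c+5+(2*d+5)-2)*((2*c+5+(2*d+5)-2)*(2*c+5+(2*d+5)-2)/4)
        + 4*((2*c+5+(2*d+5)-2)*(2*c+5+(2*d+5)-2)/4) + 6*(2*c+5+(2*d+5)-2) + 2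
        = (2*(c+d+4))*((c+d+4)*(c+d+4)) + 4*((c+d+4)*(c+d+4)) + 6*(2*(c+d+4)) + 2 := by
      rw [hgv]
      have h : (2*(c+d+4))*(2*(c+d+4)) = ((c+d+4)*(c+d+4))*4 := by ring
      have h2 : (2*(c+d+4))*(2*(c+d+4))/4 = (c+d+4)*(c+d+4) := by omega
      rw [h2]
    rw [e₁, e₂, eg]
    have key : 2*(c+d+4)*((c+d+4)*(c+d+4)) + 4*((c+d+4)*(c+d+4)) + 6*(2*(c+d+4)) + 2
        = ((2*c+5)*((c+2)*(c+3)) + (2*d+5)*((d+2)*(d+3)) + 2*(2*d+5)*((c+2)*(c+3))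
          + 2*(2*c+5)*((d+2)*(d+3)) + 2*((2*c+5)*(2*d+5)))
          + (12 + (9*d+3*(d*d)+9*c+8*(c*d)+2*(c*(d*d))+3*(c*c)+2*((c*c)*d))) := by ring
    exact ⟨by linarith [key, Nat.zero_le (c*c*d), Nat.zero_le (c*(d*d)), Nat.zero_le (c*d), Nat.zero_le (c*c), Nat.zero_le (d*d), Nat.zero_le c, Nat.zero_le d], fun _ => by linarith [key, Nat.zero_le (c*c*d), Nat.zero_le (c*(d*d)), Nat.zero_le (c*d), Nat.zero_le (c*c), Nat.zero_le (d*d), Nat.zero_le c, Nat.zero_le d]⟩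

end WienerProof

set_option maxHeartbeats 2000000 in
/-- For `m₁, m₂ ≥ 4` and `n = m₁ + m₂`:
`W(C_{m₁,m₂}^n) ≤ W(L_{n,n-2})`, with equality iff `m₁ = m₂ = 4`. -/
theorem stmt16 (n m₁ m₂ : ℕ) (h₁ : 4 ≤ m₁) (h₂ : 4 ≤ m₂) (hn : n = m₁ + m₂) :
    wienerIndex (dumbbell n m₁ m₂) ≤ wienerIndex (lollipop n (n - 2)) ∧
    (wienerIndex (dumbbell n m₁ m₂) = wienerIndex (lollipop n (n - 2)) ↔
      m₁ = 4 ∧ m₂ = 4) := by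
  have hg6 : 6 ≤ m₁ + m₂ - 2 := by omega
  have hn2 : n = (m₁ + m₂ - 2) + 2 := by omega
  rw [wiener_dumbbell hn h₁ h₂, wiener_lollipop hn2 hg6, SD_val h₁ h₂, SL_val hg6]
  obtain ⟨hle, hstrict⟩ := final_ineq m₁ m₂ h₁ h₂
  refine ⟨Nat.div_le_div_right hle, ?_, ?_⟩
  · intro heq
    by_contra hne
    have h2 := hstrict hne
    have h4 := Nat.div_le_div_right (c := 2) h2
    rw [Nat.add_div_right _ (by norm_num)] at h4
    rw [heq] at h4
    exact Nat.not_succ_le_self _ h4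
  · rintro ⟨rfl, rfl⟩
    norm_num
end
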